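/- arXiv:2203.03433 — 8 statements merged into one kernel-verified Lean document; each statement's English description precedes it below -/
import Mathlib

section
/- Let K ∈ M_n and X ∈ M_n be positive semidefinite with ker(X) ⊆ ker(K*). Setting L := X⁺K and Y := −L L*, the block matrix [[Y, L],[L*, −1_n]] is negative semidefinite and Tr[XY] + Tr[K*L] + Tr[K L*] = Tr[K* X⁺ K]. -/
open Matrix ComplexOrder

/-- `B` is the Moore–Penrose pseudoinverse of `A`. -/
def IsMoorePenroseInv {m : Type*} [Fintype m]
    (A B : Matrix m m ℂ) : Prop :=
  A * B * A = A ∧ B * A * B = B ∧ (A * B)ᴴ = A * B ∧ (B * A)ᴴ = B * A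

lemma mp_unique {m : Type*} [Fintype m] [DecidableEq m] {A B C : Matrix m m ℂ}
    (hB : IsMoorePenroseInv A B) (hC : IsMoorePenroseInv A C) : B = C := by
  obtain ⟨hB1, hB2, hB3, hB4⟩ := hB
  obtain ⟨hC1, hC2, hC3, hC4⟩ := hC
  have hB3' : Bᴴ * Aᴴ = A * B := by rw [← conjTranspose_mul]; exact hB3
  have hB4' : Aᴴ * Bᴴ = B * A := by rw [← conjTranspose_mul]; exact hB4
  have hC3' : Cᴴ * Aᴴ = A * C := by rw [← conjTranspose_mul]; exact hC3
  have hC4' : Aᴴ * Cᴴ = C * A := by rw [← conjTranspose_mul]; exact hC4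
  have hC1' : Aᴴ * Cᴴ * Aᴴ = Aᴴ := by
    have := congrArg conjTranspose hC1
    simpa [conjTranspose_mul, Matrix.mul_assoc] using this
  have hAB : A * B = A * C := by
    calc A * B = Bᴴ * Aᴴ := hB3'.symm
    _ = Bᴴ * (Aᴴ * Cᴴ * Aᴴ) := by rw [hC1']
    _ = (Bᴴ * Aᴴ) * (Cᴴ * Aᴴ) := by noncomm_ring
    _ = (A * B) * (A * C) := by rw [hB3', hC3']
    _ = (A * B * A) * C := by noncomm_ring
    _ = A * C := by rw [hB1]
  have hBA : B * A = C * A := by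
    calc B * A = Aᴴ * Bᴴ := hB4'.symm
    _ = (Aᴴ * Cᴴ * Aᴴ) * Bᴴ := by rw [hC1']
    _ = (Aᴴ * Cᴴ) * (Aᴴ * Bᴴ) := by noncomm_ring
    _ = (C * A) * (B * A) := by rw [hC4', hB4']
    _ = C * (A * B * A) := by noncomm_ring
    _ = C * A := by rw [hB1]
  calc B = B * A * B := hB2.symm
  _ = C * A * B := by rw [hBA]
  _ = C * (A * B) := by noncomm_ring
  _ = C * (A * C) := by rw [hAB]
  _ = C * A * C := by noncomm_ring
  _ = C := hC2

/-- With `L := X⁺K` and `Y := −LLᴴ`, the block matrix `[[Y, L],[Lᴴ, −1]]` is negative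
semidefinite and `Tr[XY] + Tr[KᴴL] + Tr[KLᴴ] = Tr[Kᴴ X⁺ K]`. -/
theorem sup_attained {n : ℕ}
    (K X Xp : Matrix (Fin n) (Fin n) ℂ)
    (hX : X.PosSemidef) (hXp : IsMoorePenroseInv X Xp)
    (hker : LinearMap.ker X.mulVecLin ≤ LinearMap.ker Kᴴ.mulVecLin)
    (L Y : Matrix (Fin n) (Fin n) ℂ)
    (hL : L = Xp * K) (hY : Y = -(L * Lᴴ)) :
    (-(Matrix.fromBlocks Y L Lᴴ (-1))).PosSemidef ∧
      (X * Y).trace + (Kᴴ * L).trace + (K * Lᴴ).trace = (Kᴴ * Xp * K).trace := by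
  obtain ⟨h1, h2, h3, h4⟩ := hXp
  have hXH : Xᴴ = X := hX.1
  have hXXp : X * Xpᴴ = Xp * X := by
    conv_lhs => rw [← hXH]
    rw [← conjTranspose_mul]; exact h4
  have hXpX : Xpᴴ * X = X * Xp := by
    conv_lhs => rw [← hXH]
    rw [← conjTranspose_mul]; exact h3
  -- Xp is Hermitian
  have hXpMP : IsMoorePenroseInv X Xpᴴ := by
    refine ⟨?_, ?_, ?_, ?_⟩
    · have := congrArg conjTranspose h1
      simpa [conjTranspose_mul, hXH, Matrix.mul_assoc] using this
    · have := congrArg conjTranspose h2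
      simpa [conjTranspose_mul, hXH, Matrix.mul_assoc] using this
    · rw [hXXp]; exact h4
    · rw [hXpX]; exact h3
  have hXpH : Xpᴴ = Xp := mp_unique hXpMP ⟨h1, h2, h3, h4⟩
  have hcomm : X * Xp = Xp * X := by
    conv_lhs => rw [← hXpH]
    exact hXXp
  -- kernel condition gives Xp * X * K = K
  have hKer0 : Kᴴ * (1 - Xp * X) = 0 := by
    ext i j
    have hv : X.mulVec ((1 - Xp * X).mulVec (Pi.single j 1)) = 0 := by
      rw [Matrix.mulVec_mulVec]
      have : X * (1 - Xp * X) = 0 := by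
        rw [Matrix.mul_sub, Matrix.mul_one, ← Matrix.mul_assoc, h1, sub_self]
      rw [this, Matrix.zero_mulVec]
    have hk : Kᴴ.mulVec ((1 - Xp * X).mulVec (Pi.single j 1)) = 0 := by
      have := hker (show _ ∈ LinearMap.ker X.mulVecLin from hv)
      simpa using this
    have := congrFun hk i
    rw [Matrix.mulVec_mulVec] at this
    simpa [Matrix.mulVec_single] using this
  have hK : Kᴴ = Kᴴ * (Xp * X) := by
    have := hKer0
    rw [Matrix.mul_sub, Matrix.mul_one] at this
    exact (sub_eq_zero.mp this)
  have hPK : Xp * X * K = K := by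
    have h' := congrArg conjTranspose hK
    have h'' : X * (Xp * K) = K := by
      simpa [conjTranspose_mul, hXH, hXpH, Matrix.mul_assoc] using h'.symm
    rw [← hcomm, Matrix.mul_assoc]; exact h''
  constructor
  · have hEq : -(Matrix.fromBlocks Y L Lᴴ (-1)) =
        (Matrix.fromBlocks (-L) 0 1 0) * (Matrix.fromBlocks (-L) 0 1 0)ᴴ := by
      rw [hY]
      simp [Matrix.fromBlocks_conjTranspose, Matrix.fromBlocks_multiply, Matrix.fromBlocks_neg]
    rw [hEq]
    exact Matrix.posSemidef_self_mul_conjTranspose _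
  · have hXY : X * Y = -(K * Kᴴ * Xp) := by
      rw [hY, hL, Matrix.mul_neg]
      have : X * (Xp * K * (Xp * K)ᴴ) = K * Kᴴ * Xp := by
        rw [conjTranspose_mul, hXpH]
        calc X * (Xp * K * (Kᴴ * Xp)) = (X * Xp * K) * Kᴴ * Xp := by noncomm_ring
        _ = (Xp * X * K) * Kᴴ * Xp := by rw [hcomm]
        _ = K * Kᴴ * Xp := by rw [hPK]
      rw [this]
    have t1 : (X * Y).trace = -(Kᴴ * Xp * K).trace := by
      rw [hXY, Matrix.trace_neg]
      congr 1
      rw [Matrix.trace_mul_cycle, Matrix.trace_mul_cycle]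
    have t2 : (Kᴴ * L).trace = (Kᴴ * Xp * K).trace := by
      rw [hL, ← Matrix.mul_assoc]
    have t3 : (K * Lᴴ).trace = (Kᴴ * Xp * K).trace := by
      rw [hL, conjTranspose_mul, hXpH, ← Matrix.mul_assoc,
        Matrix.trace_mul_cycle, Matrix.trace_mul_cycle]
    rw [t1, t2, t3]; ring
end

section
/- For every K ∈ M_n and positive semidefinite X ∈ M_n, Tr[K* X⁺ K] = lim_{ε→0⁺} Tr[K* (X + ε·1_n)^{-1} K] whenever ker(X) ⊆ ker(K*); if ker(X) ⊄ ker(K*), then lim_{ε→0⁺} Tr[K* (X + ε·1_n)^{-1} K] = +∞. -/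
open Matrix ComplexOrder Filter

variable {n : ℕ}

lemma aux_conj_mul (U : Matrix (Fin n) (Fin n) ℂ) (hU : Uᴴ * U = 1)
    (d e : Fin n → ℂ) :
    (U * diagonal d * Uᴴ) * (U * diagonal e * Uᴴ) = U * diagonal (fun i => d i * e i) * Uᴴ := by
  rw [mul_assoc (U * diagonal d), ← mul_assoc Uᴴ, ← mul_assoc Uᴴ, hU, one_mul,
    ← mul_assoc, mul_assoc U, diagonal_mul_diagonal]

lemma aux_conjT (U : Matrix (Fin n) (Fin n) ℂ) (d : Fin n → ℂ) :
    (U * diagonal d * Uᴴ)ᴴ = U * diagonal (fun i => star (d i)) * Uᴴ := by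
  simp only [conjTranspose_mul, diagonal_conjTranspose, conjTranspose_conjTranspose,
    mul_assoc]
  rfl

lemma aux_mp_unique (A B C : Matrix (Fin n) (Fin n) ℂ)
    (hB : A * B * A = A ∧ B * A * B = B ∧ (A * B)ᴴ = A * B ∧ (B * A)ᴴ = B * A)
    (hC : A * C * A = A ∧ C * A * C = C ∧ (A * C)ᴴ = A * C ∧ (C * A)ᴴ = C * A) :
    B = C := by
  obtain ⟨hB1, hB2, hB3, hB4⟩ := hB
  obtain ⟨hC1, hC2, hC3, hC4⟩ := hC
  have keyAC : A * C = A * B := by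
    calc A * C = (A*C)ᴴ := hC3.symm
    _ = Cᴴ * Aᴴ := conjTranspose_mul _ _
    _ = Cᴴ * (A*B*A)ᴴ := by rw [hB1]
    _ = Cᴴ * (Aᴴ * (A*B)ᴴ) := by rw [conjTranspose_mul]
    _ = (Cᴴ * Aᴴ) * (A*B) := by rw [hB3, mul_assoc]
    _ = (A*C)ᴴ * (A*B) := by rw [conjTranspose_mul]
    _ = (A*C*A)*B := by rw [hC3, mul_assoc, mul_assoc, mul_assoc]
    _ = A*B := by rw [hC1]
  have keyCA : C * A = B * A := by
    calc C * A = (C*A)ᴴ := hC4.symm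
    _ = Aᴴ * Cᴴ := conjTranspose_mul _ _
    _ = (A*B*A)ᴴ * Cᴴ := by rw [hB1]
    _ = ((B*A)ᴴ * Aᴴ) * Cᴴ := by
      simp only [conjTranspose_mul, mul_assoc]
    _ = (B*A) * (Aᴴ * Cᴴ) := by rw [hB4, mul_assoc]
    _ = (B*A) * (C*A)ᴴ := by rw [conjTranspose_mul]
    _ = B*(A*C*A) := by rw [hC4, mul_assoc, ← mul_assoc A C A]
    _ = B*A := by rw [hC1]
  calc B = B * (A * B) := by rw [← mul_assoc, hB2]
  _ = B * (A * C) := by rw [keyAC]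
  _ = (C * A) * C := by rw [← mul_assoc, ← keyCA, mul_assoc, ← mul_assoc C A C, hC2]
  _ = C := hC2

lemma aux_trace (U K : Matrix (Fin n) (Fin n) ℂ) (d : Fin n → ℝ) :
    (Kᴴ * (U * diagonal (fun i => (d i : ℂ)) * Uᴴ) * K).trace.re
      = ∑ i, d i * ∑ j, Complex.normSq ((Uᴴ * K) i j) := by
  set N := Uᴴ * K with hN
  have h1 : Kᴴ * (U * diagonal (fun i => (d i : ℂ)) * Uᴴ) * K
      = Nᴴ * (diagonal (fun i => (d i : ℂ)) * N) := by
    rw [hN, conjTranspose_mul, conjTranspose_conjTranspose]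
    noncomm_ring
  rw [h1, Matrix.trace_mul_comm, trace, Complex.re_sum]
  refine Finset.sum_congr rfl fun i _ => ?_
  have h2 : ((diagonal (fun i => (d i : ℂ)) * N) * Nᴴ) i i
      = (d i : ℂ) * ∑ j, (Complex.normSq (N i j) : ℂ) := by
    rw [mul_apply, Finset.mul_sum]
    refine Finset.sum_congr rfl fun j _ => ?_
    simp [diagonal_mul, conjTranspose_apply, mul_assoc, Complex.star_def, Complex.mul_conj]
  rw [diag_apply, h2]
  simp

lemma aux_inv (U : Matrix (Fin n) (Fin n) ℂ) (hU1 : Uᴴ * U = 1) (hU2 : U * Uᴴ = 1)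
    (d : Fin n → ℂ) (hd : ∀ i, d i ≠ 0) :
    (U * diagonal d * Uᴴ)⁻¹ = U * diagonal (fun i => (d i)⁻¹) * Uᴴ := by
  apply Matrix.inv_eq_right_inv
  rw [aux_conj_mul U hU1]
  have h : (fun i => d i * (d i)⁻¹) = fun _ => (1:ℂ) := funext fun i => mul_inv_cancel₀ (hd i)
  rw [h, diagonal_one, mul_one, hU2]

lemma aux_mp (U : Matrix (Fin n) (Fin n) ℂ) (hU1 : Uᴴ * U = 1) (hU2 : U * Uᴴ = 1)
    (l : Fin n → ℝ) :
    letI X := U * diagonal (fun i => (l i : ℂ)) * Uᴴ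
    letI P := U * diagonal (fun i => ((l i : ℂ))⁻¹) * Uᴴ
    X * P * X = X ∧ P * X * P = P ∧ (X * P)ᴴ = X * P ∧ (P * X)ᴴ = P * X := by
  set dX : Fin n → ℂ := fun i => (l i : ℂ)
  set dP : Fin n → ℂ := fun i => ((l i : ℂ))⁻¹
  refine ⟨?_, ?_, ?_, ?_⟩
  · rw [aux_conj_mul U hU1, aux_conj_mul U hU1]
    have h : (fun i => (dX i * dP i) * dX i) = dX := by
      funext i
      by_cases h : (l i : ℂ) = 0 <;> simp [dX, dP, h] <;> field_simp
    rw [h]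
  · rw [aux_conj_mul U hU1, aux_conj_mul U hU1]
    have h : (fun i => (dP i * dX i) * dP i) = dP := by
      funext i
      by_cases h : (l i : ℂ) = 0 <;> simp [dX, dP, h] <;> field_simp
    rw [h]
  · rw [aux_conj_mul U hU1, aux_conjT]
    have h : (fun i => star (dX i * dP i)) = fun i => dX i * dP i := by
      funext i
      by_cases h : (l i : ℂ) = 0 <;> simp [dX, dP, h, ← Complex.ofReal_inv]
    rw [h]
  · rw [aux_conj_mul U hU1, aux_conjT]
    have h : (fun i => star (dP i * dX i)) = fun i => dP i * dX i := by
      funext i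
      by_cases h : (l i : ℂ) = 0 <;> simp [dX, dP, h, ← Complex.ofReal_inv]
    rw [h]

/-- `Tr[Kᴴ X⁺ K] = lim_{ε→0⁺} Tr[Kᴴ (X+ε1)⁻¹ K]` when `ker X ⊆ ker Kᴴ`, and the
limit is `+∞` otherwise. -/
theorem trace_pinv_eq_lim {n : ℕ}
    (K X Xp : Matrix (Fin n) (Fin n) ℂ)
    (hX : X.PosSemidef) (hXp : IsMoorePenroseInv X Xp) :
    (LinearMap.ker X.mulVecLin ≤ LinearMap.ker Kᴴ.mulVecLin →
      Tendsto (fun ε : ℝ =>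
          (Kᴴ * (X + (ε : ℂ) • (1 : Matrix (Fin n) (Fin n) ℂ))⁻¹ * K).trace.re)
        (nhdsWithin 0 (Set.Ioi 0)) (nhds ((Kᴴ * Xp * K).trace.re))) ∧
    (¬ LinearMap.ker X.mulVecLin ≤ LinearMap.ker Kᴴ.mulVecLin →
      Tendsto (fun ε : ℝ =>
          (Kᴴ * (X + (ε : ℂ) • (1 : Matrix (Fin n) (Fin n) ℂ))⁻¹ * K).trace.re)
        (nhdsWithin 0 (Set.Ioi 0)) atTop) := by
  have hH := hX.1
  set U : Matrix (Fin n) (Fin n) ℂ := (hH.eigenvectorUnitary : Matrix (Fin n) (Fin n) ℂ) with hUdef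
  have hU1 : Uᴴ * U = 1 := by
    rw [← Matrix.star_eq_conjTranspose]
    exact (Matrix.mem_unitaryGroup_iff').mp hH.eigenvectorUnitary.2
  have hU2 : U * Uᴴ = 1 := by
    rw [← Matrix.star_eq_conjTranspose]
    exact (Matrix.mem_unitaryGroup_iff).mp hH.eigenvectorUnitary.2
  set l : Fin n → ℝ := hH.eigenvalues with hldef
  have hl : ∀ i, 0 ≤ l i := fun i => hX.eigenvalues_nonneg i
  have hspec : X = U * diagonal (fun i => (l i : ℂ)) * Uᴴ := by
    have := hH.spectral_theorem
    rw [← Matrix.star_eq_conjTranspose] at *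
    exact this
  set c : Fin n → ℝ := fun i => ∑ j, Complex.normSq ((Uᴴ * K) i j) with hcdef
  have hc : ∀ i, 0 ≤ c i := fun i => Finset.sum_nonneg fun j _ => Complex.normSq_nonneg _
  -- Xp is the explicit pseudoinverse
  have hXp' : Xp = U * diagonal (fun i => ((l i : ℂ))⁻¹) * Uᴴ := by
    have h4 := aux_mp U hU1 hU2 l
    rw [← hspec] at h4
    exact aux_mp_unique X Xp _ hXp h4
  -- value of Tr[Kᴴ Xp K].re
  have hval : (Kᴴ * Xp * K).trace.re = ∑ i, (l i)⁻¹ * c i := by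
    rw [hXp']
    have h := aux_trace U K (fun i => (l i)⁻¹)
    simp only [Complex.ofReal_inv] at h
    exact h
  -- formula for the trace at ε > 0
  have hf : ∀ ε : ℝ, 0 < ε →
      (Kᴴ * (X + (ε : ℂ) • (1 : Matrix (Fin n) (Fin n) ℂ))⁻¹ * K).trace.re
        = ∑ i, (l i + ε)⁻¹ * c i := by
    intro ε hε
    have hadd : X + (ε : ℂ) • (1 : Matrix (Fin n) (Fin n) ℂ)
        = U * diagonal (fun i => ((l i + ε : ℝ) : ℂ)) * Uᴴ := by
      have h1 : (ε : ℂ) • (1 : Matrix (Fin n) (Fin n) ℂ)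
          = U * diagonal (fun _ => (ε : ℂ)) * Uᴴ := by
        rw [Matrix.smul_one_eq_diagonal]
        calc diagonal (fun _ => (ε:ℂ)) = (U * Uᴴ) * diagonal (fun _ => (ε:ℂ)) := by
              rw [hU2, one_mul]
        _ = U * diagonal (fun _ => (ε:ℂ)) * Uᴴ := by
              rw [mul_assoc, mul_assoc]
              congr 1
              funext a b
              simp [mul_apply, diagonal, mul_comm]
      rw [hspec, h1, ← add_mul, ← mul_add, diagonal_add]
      push_cast
      rfl
    have hne : ∀ i, ((l i + ε : ℝ) : ℂ) ≠ 0 := fun i => by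
      exact_mod_cast ne_of_gt (add_pos_of_nonneg_of_pos (hl i) hε)
    rw [hadd, aux_inv U hU1 hU2 _ hne]
    have h := aux_trace U K (fun i => (l i + ε)⁻¹)
    simp only [Complex.ofReal_inv] at h
    exact h
  constructor
  · intro hker
    have hker' : ∀ i, l i = 0 → c i = 0 := by
      intro i hli
      set u : Fin n → ℂ := fun k => U k i with hu
      have hMu : ∀ (M : Matrix (Fin n) (Fin n) ℂ), M *ᵥ u = fun j => (M * U) j i := by
        intro M
        funext j
        simp [hu, mulVec, dotProduct, mul_apply]
      have hXu : X *ᵥ u = 0 := by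
        rw [hMu, hspec, mul_assoc, mul_assoc, hU1, mul_one]
        funext j
        simp [mul_diagonal, hli]
      have hmem : u ∈ LinearMap.ker X.mulVecLin := by
        rw [LinearMap.mem_ker, mulVecLin_apply, hXu]
      have hKu : Kᴴ *ᵥ u = 0 := by
        have := hker hmem
        rwa [LinearMap.mem_ker, mulVecLin_apply] at this
      have hcol : ∀ j, (Kᴴ * U) j i = 0 := by
        intro j
        have := congrFun (hMu Kᴴ) j
        rw [hKu] at this
        simpa using this.symm
      have hrel : ∀ j, (Uᴴ * K) i j = star ((Kᴴ * U) j i) := by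
        intro j
        simp only [mul_apply, conjTranspose_apply, star_sum, star_mul', star_star]
        exact Finset.sum_congr rfl fun k _ => mul_comm _ _
      simp only [hcdef]
      refine Finset.sum_eq_zero fun j _ => ?_
      rw [hrel j, hcol j]
      simp
    have hlim : Tendsto (fun ε : ℝ => ∑ i, (l i + ε)⁻¹ * c i)
        (nhdsWithin 0 (Set.Ioi 0)) (nhds (∑ i, (l i)⁻¹ * c i)) := by
      apply tendsto_finset_sum
      intro i _
      rcases eq_or_lt_of_le (hl i) with h0 | h0
      · have : c i = 0 := hker' i h0.symm
        simp only [this, mul_zero]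
        exact tendsto_const_nhds
      · have : Tendsto (fun ε : ℝ => (l i + ε)⁻¹ * c i) (nhds 0)
            (nhds ((l i)⁻¹ * c i)) := by
          have h1 : Tendsto (fun ε : ℝ => l i + ε) (nhds 0) (nhds (l i)) := by
            simpa using (tendsto_const_nhds.add tendsto_id :
              Tendsto (fun ε : ℝ => l i + ε) (nhds 0) (nhds (l i + 0)))
          exact (h1.inv₀ h0.ne').mul tendsto_const_nhds
        exact this.mono_left nhdsWithin_le_nhds
    rw [hval]
    refine hlim.congr' ?_
    filter_upwards [self_mem_nhdsWithin] with ε hε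
    exact (hf ε hε).symm
  · intro hker
    have hker' : ∃ i, l i = 0 ∧ 0 < c i := by
      obtain ⟨v, hv1, hv2⟩ := SetLike.not_le_iff_exists.mp hker
      rw [LinearMap.mem_ker, mulVecLin_apply] at hv1
      rw [LinearMap.mem_ker, mulVecLin_apply] at hv2
      set w : Fin n → ℂ := Uᴴ *ᵥ v with hw
      have hvw : U *ᵥ w = v := by
        rw [hw, mulVec_mulVec, hU2, one_mulVec]
      have hDw : ∀ i, (l i : ℂ) * w i = 0 := by
        have h1 : X *ᵥ v = U *ᵥ (diagonal (fun i => (l i : ℂ)) *ᵥ w) := by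
          rw [hspec, hw, mulVec_mulVec, mulVec_mulVec, mul_assoc]
        have h2 : diagonal (fun i => (l i : ℂ)) *ᵥ w = 0 := by
          have h3 : Uᴴ *ᵥ (U *ᵥ (diagonal (fun i => (l i : ℂ)) *ᵥ w)) = 0 := by
            rw [← h1, hv1, mulVec_zero]
          rwa [mulVec_mulVec, hU1, one_mulVec] at h3
        intro i
        have := congrFun h2 i
        rwa [mulVec_diagonal] at this
      have hKw : (Kᴴ * U) *ᵥ w ≠ 0 := by
        rw [← mulVec_mulVec, hvw]
        exact hv2
      obtain ⟨j, hj⟩ := Function.ne_iff.mp hKw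
      have hj' : ∑ i, (Kᴴ * U) j i * w i ≠ 0 := by
        simpa [mulVec, dotProduct] using hj
      obtain ⟨i, _, hi⟩ := Finset.exists_ne_zero_of_sum_ne_zero hj'
      have hwi : w i ≠ 0 := right_ne_zero_of_mul hi
      have hKUi : (Kᴴ * U) j i ≠ 0 := left_ne_zero_of_mul hi
      refine ⟨i, ?_, ?_⟩
      · have := hDw i
        have hli : (l i : ℂ) = 0 := by
          rcases mul_eq_zero.mp this with h | h
          · exact h
          · exact absurd h hwi
        exact_mod_cast hli
      · have hrel : (Uᴴ * K) i j = star ((Kᴴ * U) j i) := by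
          simp only [mul_apply, conjTranspose_apply, star_sum, star_mul', star_star]
          exact Finset.sum_congr rfl fun k _ => mul_comm _ _
        have hpos : 0 < Complex.normSq ((Uᴴ * K) i j) := by
          rw [hrel]
          simpa [Complex.normSq_pos] using hKUi
        exact Finset.sum_pos' (fun j _ => Complex.normSq_nonneg _) ⟨j, Finset.mem_univ j, hpos⟩
    obtain ⟨i0, hi0, hci0⟩ := hker'
    have hbound : ∀ᶠ ε : ℝ in nhdsWithin 0 (Set.Ioi 0),
        c i0 * ε⁻¹ ≤ (Kᴴ * (X + (ε : ℂ) • (1 : Matrix (Fin n) (Fin n) ℂ))⁻¹ * K).trace.re := by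
      filter_upwards [self_mem_nhdsWithin] with ε hε
      rw [hf ε hε]
      have : c i0 * ε⁻¹ = (l i0 + ε)⁻¹ * c i0 := by rw [hi0, zero_add, mul_comm]
      rw [this]
      exact Finset.single_le_sum (fun i _ => mul_nonneg (inv_nonneg.mpr (add_nonneg (hl i) hε.le)) (hc i))
        (Finset.mem_univ i0)
    exact tendsto_atTop_mono' _ hbound (tendsto_inv_nhdsGT_zero.const_mul_atTop hci0)
end

section
/- Let φ: M_n → M_m be a positive linear map. Then φ is a generalized Schwarz map if and only if for every pair (K, X) ∈ M_m × M_m⁺ with ker(X) ⊆ ker(K*), the tracial inequality Tr[φ*(K* X⁺ K)] ≥ Tr[φ*(K)* φ*(X)⁺ φ*(K)] holds. -/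
open Matrix ComplexOrder

/-- `φ` is a generalized Schwarz map. -/
def IsGenSchwarz {n m : ℕ}
    (φ : Matrix (Fin n) (Fin n) ℂ →ₗ[ℂ] Matrix (Fin m) (Fin m) ℂ) : Prop :=
  ∀ K : Matrix (Fin n) (Fin n) ℂ,
    (Matrix.fromBlocks (φ 1) (φ K) (φ K)ᴴ (φ (Kᴴ * K))).PosSemidef

/-!
Write `ψ` for `φ*`. The Schwarz block `B_L = [[φ 1, φ L], [(φ L)ᴴ, φ (Lᴴ L)]]` pairs with
`Q = [[Kᴴ X⁺ K, Kᴴ], [K, X]]`, which is positive semidefinite once `X X⁺ K = K`, i.e.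
`ker X ⊆ ker Kᴴ`, and moving `φ` to `ψ` gives
`Re Tr (B_L Q) = Re Tr ψ(Kᴴ X⁺ K) + 2 Re Tr (L ψ(K)) + Re Tr (L ψ(X) Lᴴ)`.
At `L = -ψ(K)ᴴ ψ(X)⁺` the last two terms add up to `-Re Tr (ψ(K)ᴴ ψ(X)⁺ ψ(K))`, so a Schwarz
map satisfies the tracial inequality. Conversely, when `ψ(X) ψ(X)⁺ ψ(K) = ψ(K)`, completing the
square shows that they never add up to less, so the tracial inequality makes `Re Tr (B_L Q)`
nonnegative. For `x = (u, v)` take `K = v uᴴ` and `X = v vᴴ + ε`. The range condition holds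
because `ψ(X) ≥ ε ψ(1)` and `ker ψ(1)` is killed by every `ψ(B)` (positive matrices span `M_m`
and each is bounded by a multiple of `1`). Since `Kᴴ X⁻¹ K ≤ u uᴴ`, `Re Tr (B_L Q)` is at most
`xᴴ B_L x + ε Re Tr φ(Lᴴ L)`, and letting `ε → 0` gives `xᴴ B_L x ≥ 0`.
-/

theorem Matrix.PosSemidef.posDef_add_smul_one {k : Type*} [DecidableEq k] {P : Matrix k k ℂ}
    (hP : P.PosSemidef) {ε : ℝ} (hε : 0 < ε) : (P + (ε : ℂ) • 1).PosDef :=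
  PosDef.posSemidef_add hP (PosDef.one.smul (by exact_mod_cast hε))

section Matrix

variable {k : Type*} [Fintype k]

theorem Matrix.mul_eq_zero_of_ker_le {A K M : Matrix k k ℂ}
    (hker : LinearMap.ker A.mulVecLin ≤ LinearMap.ker K.mulVecLin) (h : A * M = 0) :
    K * M = 0 := by
  refine ext_iff_mulVec.mpr fun v => ?_
  have hv : M *ᵥ v ∈ LinearMap.ker A.mulVecLin := by simp [mulVec_mulVec, h]
  simpa [mulVec_mulVec] using hker hv

open scoped MatrixOrder in
theorem Matrix.PosSemidef.trace_mul_nonneg [DecidableEq k] {A B : Matrix k k ℂ} (hA : A.PosSemidef)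
    (hB : B.PosSemidef) : 0 ≤ (A * B).trace := by
  obtain ⟨C, rfl⟩ := CStarAlgebra.nonneg_iff_eq_star_mul_self.mp hB.nonneg
  rw [← Matrix.mul_assoc, trace_mul_comm]
  simpa only [Matrix.mul_assoc, star_eq_conjTranspose] using
    (hA.mul_mul_conjTranspose_same C).trace_nonneg

theorem Matrix.trace_mul_vecMulVec (M : Matrix k k ℂ) (x y : k → ℂ) :
    (M * vecMulVec x y).trace = y ⬝ᵥ (M *ᵥ x) := by
  rw [mul_vecMulVec, trace_vecMulVec, dotProduct_comm]

theorem Matrix.trace_fromBlocks (A B C D : Matrix k k ℂ) :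
    (fromBlocks A B C D).trace = A.trace + D.trace := by
  simp [trace, Fintype.sum_sum_type]

theorem Matrix.re_trace_fromBlocks_mul_fromBlocks (A B D P K X : Matrix k k ℂ) :
    (fromBlocks A B Bᴴ D * fromBlocks P Kᴴ K X).trace.re
      = (A * P).trace.re + 2 * (B * K).trace.re + (D * X).trace.re := by
  rw [fromBlocks_multiply, trace_fromBlocks, trace_add, trace_add, ← conjTranspose_mul,
    trace_conjTranspose, trace_mul_comm K]
  simp only [Complex.add_re, Complex.star_def, Complex.conj_re]
  ring

theorem Matrix.re_dotProduct_fromBlocks_mulVec (A B D : Matrix k k ℂ) (u v : k → ℂ) :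
    (star (Sum.elim u v) ⬝ᵥ fromBlocks A B Bᴴ D *ᵥ Sum.elim u v).re
      = (A * vecMulVec u (star u)).trace.re + 2 * (B * vecMulVec v (star u)).trace.re
        + (D * vecMulVec v (star v)).trace.re := by
  have hx : vecMulVec (Sum.elim u v) (star (Sum.elim u v)) = fromBlocks (vecMulVec u (star u))
      (vecMulVec v (star u))ᴴ (vecMulVec v (star u)) (vecMulVec v (star v)) := by
    ext (i | i) (j | j) <;> simp [vecMulVec_apply]
  rw [← trace_mul_vecMulVec, hx, re_trace_fromBlocks_mul_fromBlocks]

theorem Matrix.PosSemidef.ker_add_le_ker_right {A B : Matrix k k ℂ} (hA : A.PosSemidef)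
    (hB : B.PosSemidef) : LinearMap.ker (A + B).mulVecLin ≤ LinearMap.ker B.mulVecLin := by
  intro y hy
  simp only [LinearMap.mem_ker, mulVecLin_apply, add_mulVec] at hy ⊢
  have h0 : star y ⬝ᵥ A *ᵥ y + star y ⬝ᵥ B *ᵥ y = 0 := by
    rw [← dotProduct_add, hy, dotProduct_zero]
  have hBy := ((add_eq_zero_iff_of_nonneg (hA.dotProduct_mulVec_nonneg y)
    (hB.dotProduct_mulVec_nonneg y)).mp h0).2
  exact (hB.dotProduct_mulVec_zero_iff y).mp hBy

theorem Matrix.posSemidef_vecMulVec_sub_mul_inv_mul [DecidableEq k] (u v : k → ℂ) {ε : ℝ}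
    (hε : 0 < ε) :
    (vecMulVec u (star u) - (vecMulVec v (star u))ᴴ * (vecMulVec v (star v) + (ε : ℂ) • 1)⁻¹
      * vecMulVec v (star u)).PosSemidef := by
  set X := vecMulVec v (star v) + (ε : ℂ) • 1
  have hdet : IsUnit X.det :=
    ((posSemidef_vecMulVec_self_star v).posDef_add_smul_one hε).det_pos.ne'.isUnit
  have hvv := dotProduct_star_self_nonneg v
  set s := (star v ⬝ᵥ v).re
  have hs : 0 ≤ s := (Complex.nonneg_iff.mp hvv).1
  have hsv : star v ⬝ᵥ v = s := Complex.eq_re_of_ofReal_le (by exact_mod_cast hvv)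
  have hsε : (s + ε : ℂ) ≠ 0 := by exact_mod_cast (by positivity : s + ε ≠ 0)
  have hXv : X *ᵥ v = (s + ε : ℂ) • v := by
    rw [add_mulVec, vecMulVec_mulVec, smul_mulVec, one_mulVec, hsv, op_smul_eq_smul, add_smul]
  have hXinv : X⁻¹ *ᵥ v = (s + ε : ℂ)⁻¹ • v := by
    rw [← inv_smul_smul₀ hsε (X⁻¹ *ᵥ v), ← mulVec_smul, ← hXv, mulVec_mulVec,
      nonsing_inv_mul _ hdet, one_mulVec]
  have hprod : (vecMulVec v (star u))ᴴ * X⁻¹ * vecMulVec v (star u)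
      = ((s / (s + ε) : ℝ) : ℂ) • vecMulVec u (star u) := by
    rw [conjTranspose_vecMulVec, star_star, Matrix.mul_assoc, mul_vecMulVec, hXinv,
      vecMulVec_mul_vecMulVec]
    ext i j
    simp only [vecMulVec_apply, dotProduct_smul, hsv, Pi.smul_apply, Pi.star_apply, smul_apply,
      smul_eq_mul]
    push_cast
    field_simp
  have hdiff : vecMulVec u (star u) - ((s / (s + ε) : ℝ) : ℂ) • vecMulVec u (star u)
      = ((ε / (s + ε) : ℝ) : ℂ) • vecMulVec u (star u) := by
    ext i j
    simp only [sub_apply, smul_apply, smul_eq_mul]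
    push_cast
    field_simp
    ring
  rw [hprod, hdiff]
  exact (posSemidef_vecMulVec_self_star u).smul (by positivity)

end Matrix

namespace IsMoorePenroseInv

variable {k : Type*} [Fintype k] {A B C K : Matrix k k ℂ}

theorem conjTranspose (h : IsMoorePenroseInv A B) : IsMoorePenroseInv Aᴴ Bᴴ := by
  obtain ⟨hABA, hBAB, hAB, hBA⟩ := h
  refine ⟨?_, ?_, ?_, ?_⟩
  · rw [← conjTranspose_mul, ← conjTranspose_mul, ← Matrix.mul_assoc, hABA]
  · rw [← conjTranspose_mul, ← conjTranspose_mul, ← Matrix.mul_assoc, hBAB]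
  · rw [← conjTranspose_mul, hBA, hBA]
  · rw [← conjTranspose_mul, hAB, hAB]

theorem mul_left_eq (hB : IsMoorePenroseInv A B) (hC : IsMoorePenroseInv A C) :
    A * B = A * C :=
  calc A * B = (A * C * A * B)ᴴ := by rw [hC.1, hB.2.2.1]
    _ = (A * B)ᴴ * (A * C)ᴴ := by simp only [conjTranspose_mul, Matrix.mul_assoc]
    _ = A * C := by rw [hB.2.2.1, hC.2.2.1, ← Matrix.mul_assoc, hB.1]

theorem unique (hB : IsMoorePenroseInv A B) (hC : IsMoorePenroseInv A C) : B = C := by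
  have hBA : B * A = C * A := by
    simpa only [conjTranspose_mul, conjTranspose_conjTranspose] using
      congrArg (·ᴴ) (mul_left_eq hB.conjTranspose hC.conjTranspose)
  rw [← hB.2.1, Matrix.mul_assoc, mul_left_eq hB hC, ← Matrix.mul_assoc, hBA, hC.2.1]

theorem conjTranspose_eq (hA : A.IsHermitian) (hB : IsMoorePenroseInv A B) : Bᴴ = B :=
  (hA.eq ▸ hB.conjTranspose).unique hB

theorem posSemidef (hA : A.PosSemidef) (hB : IsMoorePenroseInv A B) : B.PosSemidef := by
  rw [← hB.2.1]
  nth_rw 1 [← hB.conjTranspose_eq hA.isHermitian]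
  exact hA.conjTranspose_mul_mul_same B

theorem mul_mul_eq_of_ker_le [DecidableEq k] (hA : A.IsHermitian) (hB : IsMoorePenroseInv A B)
    (hker : LinearMap.ker A.mulVecLin ≤ LinearMap.ker Kᴴ.mulVecLin) : A * B * K = K := by
  have hAAB : A * (A * B) = A :=
    calc A * (A * B) = (A * B * A)ᴴ := by rw [conjTranspose_mul, hA.eq, hB.2.2.1]
      _ = A := by rw [hB.1, hA.eq]
  have h : Kᴴ * (1 - A * B) = 0 :=
    mul_eq_zero_of_ker_le hker (by rw [Matrix.mul_sub, hAAB, Matrix.mul_one, sub_self])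
  have hK := congrArg (·ᴴ) h
  simp only [conjTranspose_mul, conjTranspose_sub, conjTranspose_one, hB.2.2.1,
    conjTranspose_conjTranspose, conjTranspose_zero, Matrix.sub_mul, Matrix.one_mul,
    sub_eq_zero] at hK
  exact hK.symm

theorem posSemidef_fromBlocks [DecidableEq k] (hA : A.PosSemidef) (hB : IsMoorePenroseInv A B)
    (hK : A * B * K = K) : (fromBlocks (Kᴴ * B * K) Kᴴ K A).PosSemidef := by
  have hBh : Bᴴ = B := hB.conjTranspose_eq hA.isHermitian
  have hKh : Kᴴ * B * A = Kᴴ := by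
    simpa only [conjTranspose_mul, hBh, hA.isHermitian.eq, Matrix.mul_assoc] using
      congrArg (·ᴴ) hK
  have hR : fromBlocks (Kᴴ * B * K) Kᴴ K A = (fromCols (B * K) 1)ᴴ * A * fromCols (B * K) 1 := by
    rw [conjTranspose_fromCols_eq_fromRows_conjTranspose, fromRows_mul, fromRows_mul_fromCols]
    simp only [conjTranspose_mul, hBh, conjTranspose_one, Matrix.one_mul, Matrix.mul_one]
    rw [← Matrix.mul_assoc, hKh, ← Matrix.mul_assoc, hK]
  rw [hR]
  exact hA.conjTranspose_mul_mul_same _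

theorem re_trace_quadratic_nonneg (hA : A.PosSemidef) (hB : IsMoorePenroseInv A B)
    (hK : A * B * K = K) (L : Matrix k k ℂ) :
    0 ≤ (Kᴴ * B * K).trace.re + 2 * (L * K).trace.re + (L * A * Lᴴ).trace.re := by
  have hBh : Bᴴ = B := hB.conjTranspose_eq hA.isHermitian
  have hKh : Kᴴ * B * A = Kᴴ := by
    simpa only [conjTranspose_mul, hBh, hA.isHermitian.eq, Matrix.mul_assoc] using
      congrArg (·ᴴ) hK
  have hsq : 0 ≤ ((A * Lᴴ + K)ᴴ * B * (A * Lᴴ + K)).trace :=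
    ((hB.posSemidef hA).conjTranspose_mul_mul_same _).trace_nonneg
  have hexp : (A * Lᴴ + K)ᴴ * B * (A * Lᴴ + K)
      = Kᴴ * B * K + L * K + (L * K)ᴴ + L * A * Lᴴ := by
    rw [conjTranspose_add, conjTranspose_mul, hA.isHermitian.eq, conjTranspose_conjTranspose]
    calc (L * A + Kᴴ) * B * (A * Lᴴ + K)
        = Kᴴ * B * K + L * (A * B * K) + Kᴴ * B * A * Lᴴ + L * (A * B * A) * Lᴴ := by
          noncomm_ring
      _ = Kᴴ * B * K + L * K + (L * K)ᴴ + L * A * Lᴴ := by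
          rw [hB.1, hK, hKh, conjTranspose_mul]
  rw [hexp, trace_add, trace_add, trace_add, trace_conjTranspose] at hsq
  have hre := (Complex.nonneg_iff.mp hsq).1
  simp only [Complex.add_re, Complex.star_def, Complex.conj_re] at hre
  linarith

theorem _root_.Matrix.isMoorePenroseInv_inv [DecidableEq k] (hA : IsUnit A.det) :
    IsMoorePenroseInv A A⁻¹ := by
  refine ⟨?_, ?_, ?_, ?_⟩ <;> simp [mul_nonsing_inv _ hA, nonsing_inv_mul _ hA]

theorem _root_.Matrix.IsHermitian.isMoorePenroseInv_cfc_inv [DecidableEq k]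
    (hA : A.IsHermitian) : IsMoorePenroseInv A (cfc (·⁻¹ : ℝ → ℝ) A) := by
  have hA' : IsSelfAdjoint A := hA
  have hfin : (spectrum ℝ A).Finite := finite_real_spectrum
  have hmul (f g : ℝ → ℝ) : cfc (fun x => f x * g x) A = cfc f A * cfc g A :=
    cfc_mul f g A (hfin.continuousOn _) (hfin.continuousOn _)
  have hmul_self (f : ℝ → ℝ) : cfc f A * A = cfc (fun x => f x * x) A := by
    rw [hmul, cfc_id' ℝ A]
  have hself_mul (f : ℝ → ℝ) : A * cfc f A = cfc (fun x => x * f x) A := by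
    rw [hmul, cfc_id' ℝ A]
  refine ⟨?_, ?_, ?_, ?_⟩
  · rw [hself_mul, hmul_self]
    simp only [mul_inv_mul_cancel]
    exact cfc_id' ℝ A
  · rw [hmul_self, ← hmul]
    congr 1 with x
    simpa using mul_inv_mul_cancel x⁻¹
  · rw [hself_mul]
    exact (cfc_predicate (fun x : ℝ => x * x⁻¹) A).star_eq
  · rw [hmul_self]
    exact (cfc_predicate (fun x : ℝ => x⁻¹ * x) A).star_eq

end IsMoorePenroseInv

section PositiveMap

open scoped Matrix.Norms.L2Operator MatrixOrder

variable {k l : Type*} [Fintype k] [DecidableEq k] {T : Matrix k k ℂ →ₗ[ℂ] Matrix l l ℂ}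

theorem Matrix.span_posSemidef : Submodule.span ℂ {A : Matrix k k ℂ | A.PosSemidef} = ⊤ := by
  simpa only [nonneg_iff_posSemidef] using CStarAlgebra.span_nonneg (A := Matrix k k ℂ)

theorem LinearMap.map_conjTranspose_of_posSemidef
    (hT : ∀ A, A.PosSemidef → (T A).PosSemidef) (A : Matrix k k ℂ) : T Aᴴ = (T A)ᴴ := by
  have hA : A ∈ Submodule.span ℂ {A : Matrix k k ℂ | A.PosSemidef} :=
    span_posSemidef (k := k) ▸ Submodule.mem_top
  induction hA using Submodule.span_induction with
  | mem x hx => rw [hx.isHermitian.eq, (hT x hx).isHermitian.eq]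
  | zero => simp
  | add x y _ _ hx hy => simp [hx, hy]
  | smul c x _ hx => simp [hx]

theorem LinearMap.map_mulVec_eq_zero_of_map_one_mulVec_eq_zero [Fintype l]
    (hT : ∀ A, A.PosSemidef → (T A).PosSemidef) {y : l → ℂ} (hy : T 1 *ᵥ y = 0)
    (A : Matrix k k ℂ) : T A *ᵥ y = 0 := by
  have hA : A ∈ Submodule.span ℂ {A : Matrix k k ℂ | A.PosSemidef} :=
    span_posSemidef (k := k) ▸ Submodule.mem_top
  induction hA using Submodule.span_induction with
  | mem P hP =>
    have hle : (T (algebraMap ℝ _ ‖P‖ - P)).PosSemidef :=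
      hT _ (by simpa [Matrix.le_iff] using IsSelfAdjoint.le_algebraMap_norm_self hP.isHermitian)
    have h1 := hle.dotProduct_mulVec_nonneg y
    rw [map_sub, Algebra.algebraMap_eq_smul_one, map_smul_of_tower, sub_mulVec, smul_mulVec, hy,
      smul_zero, zero_sub, dotProduct_neg, neg_nonneg] at h1
    exact ((hT P hP).dotProduct_mulVec_zero_iff y).mp
      (le_antisymm h1 ((hT P hP).dotProduct_mulVec_nonneg y))
  | zero => simp
  | add x y _ _ hx hy => simp [add_mulVec, hx, hy]
  | smul c x _ hx => simp [smul_mulVec, hx]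

end PositiveMap

def TracialIneq {k l : Type*} [Fintype k] [Fintype l] (ψ : Matrix l l ℂ →ₗ[ℂ] Matrix k k ℂ) :
    Prop :=
  ∀ (K X Xp : Matrix l l ℂ) (ψXp : Matrix k k ℂ), X.PosSemidef →
    LinearMap.ker X.mulVecLin ≤ LinearMap.ker Kᴴ.mulVecLin →
    IsMoorePenroseInv X Xp → IsMoorePenroseInv (ψ X) ψXp →
    ((ψ K)ᴴ * ψXp * ψ K).trace.re ≤ (ψ (Kᴴ * Xp * K)).trace.re

section Adjoint

variable {k l : Type*} [Fintype k] [DecidableEq k] [Fintype l]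
  {φ : Matrix k k ℂ →ₗ[ℂ] Matrix l l ℂ} {ψ : Matrix l l ℂ →ₗ[ℂ] Matrix k k ℂ}
  (hφ : ∀ A, A.PosSemidef → (φ A).PosSemidef)
  (hadj : ∀ A B, (Aᴴ * φ B).trace = ((ψ A)ᴴ * B).trace)
include hφ hadj

theorem trace_adjoint_mul (A : Matrix l l ℂ) (B : Matrix k k ℂ) :
    (ψ A * B).trace = (A * φ B).trace :=
  calc (ψ A * B).trace = star ((ψ A)ᴴ * Bᴴ).trace := by
        rw [← conjTranspose_mul, trace_conjTranspose, star_star, trace_mul_comm]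
    _ = star (Aᴴ * φ Bᴴ).trace := by rw [hadj]
    _ = (A * φ B).trace := by
        rw [φ.map_conjTranspose_of_posSemidef hφ, ← conjTranspose_mul, trace_conjTranspose,
          star_star, trace_mul_comm]

theorem adjoint_conjTranspose (A : Matrix l l ℂ) : ψ Aᴴ = (ψ A)ᴴ :=
  ext_iff_trace_mul_right.mpr fun B => by rw [trace_adjoint_mul hφ hadj, hadj]

theorem adjoint_posSemidef [DecidableEq l] {A : Matrix l l ℂ} (hA : A.PosSemidef) :
    (ψ A).PosSemidef := by
  refine .of_dotProduct_mulVec_nonneg ?_ fun y => ?_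
  · rw [IsHermitian, ← adjoint_conjTranspose hφ hadj, hA.isHermitian.eq]
  · rw [← trace_mul_vecMulVec, trace_adjoint_mul hφ hadj]
    exact hA.trace_mul_nonneg (hφ _ (posSemidef_vecMulVec_self_star y))

theorem re_trace_pairing_eq_adjoint (L : Matrix k k ℂ) (P K X : Matrix l l ℂ) :
    (φ 1 * P).trace.re + 2 * (φ L * K).trace.re + (φ (Lᴴ * L) * X).trace.re
      = (ψ P).trace.re + 2 * (L * ψ K).trace.re + (L * ψ X * Lᴴ).trace.re := by
  have h1 : (φ 1 * P).trace = (ψ P).trace := by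
    rw [trace_mul_comm, ← trace_adjoint_mul hφ hadj, Matrix.mul_one]
  have h2 : (φ L * K).trace = (L * ψ K).trace := by
    rw [trace_mul_comm, ← trace_adjoint_mul hφ hadj, trace_mul_comm]
  have h3 : (φ (Lᴴ * L) * X).trace = (L * ψ X * Lᴴ).trace := by
    rw [trace_mul_comm, ← trace_adjoint_mul hφ hadj, trace_mul_cycle L, trace_mul_comm]
  rw [h1, h2, h3]

theorem TracialIneq.re_trace_pairing_nonneg [DecidableEq l] (hT : TracialIneq ψ) (L : Matrix k k ℂ)
    (K : Matrix l l ℂ) {P : Matrix l l ℂ} (hP : P.PosSemidef) {ε : ℝ} (hε : 0 < ε) :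
    0 ≤ (φ 1 * (Kᴴ * (P + (ε : ℂ) • 1)⁻¹ * K)).trace.re + 2 * (φ L * K).trace.re
      + (φ (Lᴴ * L) * (P + (ε : ℂ) • 1)).trace.re := by
  set X := P + (ε : ℂ) • 1
  have hX : X.PosDef := hP.posDef_add_smul_one hε
  have hdet : IsUnit X.det := hX.det_pos.ne'.isUnit
  have hker : LinearMap.ker X.mulVecLin ≤ LinearMap.ker Kᴴ.mulVecLin := by
    intro y hy
    have : y = 0 := by simpa [nonsing_inv_mul _ hdet] using congrArg (X⁻¹ *ᵥ ·) hy
    simp [this]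
  have hψ : ∀ A, A.PosSemidef → (ψ A).PosSemidef := fun A hA => adjoint_posSemidef hφ hadj hA
  have hψX : (ψ X).PosSemidef := hψ X hX.posSemidef
  have hψXp := hψX.isHermitian.isMoorePenroseInv_cfc_inv
  have hψker : LinearMap.ker (ψ X).mulVecLin ≤ LinearMap.ker (ψ K)ᴴ.mulVecLin := by
    intro y hy
    have hy1 : y ∈ LinearMap.ker ((ε : ℂ) • ψ 1).mulVecLin := by
      refine (hψ P hP).ker_add_le_ker_right ((hψ 1 .one).smul ?_) ?_
      · exact_mod_cast hε.le
      · simpa [X] using hy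
    replace hy1 : ψ 1 *ᵥ y = 0 := by simpa [hε.ne'] using hy1
    simpa [← adjoint_conjTranspose hφ hadj] using
      ψ.map_mulVec_eq_zero_of_map_one_mulVec_eq_zero hψ hy1 Kᴴ
  have hsq := hψXp.re_trace_quadratic_nonneg hψX
    (hψXp.mul_mul_eq_of_ker_le hψX.isHermitian hψker) L
  rw [re_trace_pairing_eq_adjoint hφ hadj]
  linarith [hT K X X⁻¹ _ hX.posSemidef hker (isMoorePenroseInv_inv hdet) hψXp]

end Adjoint

section Schwarz

variable {n m : ℕ} {φ : Matrix (Fin n) (Fin n) ℂ →ₗ[ℂ] Matrix (Fin m) (Fin m) ℂ}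
  {ψ : Matrix (Fin m) (Fin m) ℂ →ₗ[ℂ] Matrix (Fin n) (Fin n) ℂ}
  (hφ : ∀ X : Matrix (Fin n) (Fin n) ℂ, X.PosSemidef → (φ X).PosSemidef)
  (hadj : ∀ (A : Matrix (Fin m) (Fin m) ℂ) (B : Matrix (Fin n) (Fin n) ℂ),
      (Aᴴ * φ B).trace = ((ψ A)ᴴ * B).trace)
include hφ hadj

theorem IsGenSchwarz.tracialIneq (hS : IsGenSchwarz φ) : TracialIneq ψ := by
  intro K X Xp ψXp hX hker hXp hψXp
  set L := -((ψ K)ᴴ * ψXp)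
  have hpair : 0 ≤ (ψ (Kᴴ * Xp * K)).trace.re + 2 * (L * ψ K).trace.re
      + (L * ψ X * Lᴴ).trace.re := by
    rw [← re_trace_pairing_eq_adjoint hφ hadj, ← re_trace_fromBlocks_mul_fromBlocks]
    exact (Complex.nonneg_iff.mp <| (hS L).trace_mul_nonneg <|
      hXp.posSemidef_fromBlocks hX (hXp.mul_mul_eq_of_ker_le hX.isHermitian hker)).1
  have hψXph : ψXpᴴ = ψXp := hψXp.conjTranspose_eq (adjoint_posSemidef hφ hadj hX).isHermitian
  have hcross : L * ψ K = -((ψ K)ᴴ * ψXp * ψ K) := by rw [Matrix.neg_mul]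
  have hsq : L * ψ X * Lᴴ = (ψ K)ᴴ * (ψXp * ψ X * ψXp) * ψ K := by
    simp only [L, conjTranspose_neg, conjTranspose_mul, conjTranspose_conjTranspose, hψXph,
      Matrix.neg_mul, Matrix.mul_neg, neg_neg, Matrix.mul_assoc]
  rw [hcross, hsq, hψXp.2.1, trace_neg, Complex.neg_re] at hpair
  linarith

theorem TracialIneq.isGenSchwarz (hT : TracialIneq ψ) : IsGenSchwarz φ := by
  intro L
  set B := fromBlocks (φ 1) (φ L) (φ L)ᴴ (φ (Lᴴ * L))
  have hB : B.IsHermitian := (hφ 1 .one).isHermitian.fromBlocks rfl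
    (hφ _ (posSemidef_conjTranspose_mul_self L)).isHermitian
  refine .of_dotProduct_mulVec_nonneg hB fun x => ?_
  obtain ⟨u, v, rfl⟩ : ∃ u v, x = Sum.elim u v := ⟨_, _, (Sum.elim_comp_inl_inr x).symm⟩
  have hquad := re_dotProduct_fromBlocks_mulVec (φ 1) (φ L) (φ (Lᴴ * L)) u v
  set C := (φ (Lᴴ * L)).trace.re
  have hC : 0 ≤ C :=
    (Complex.nonneg_iff.mp (hφ _ (posSemidef_conjTranspose_mul_self L)).trace_nonneg).1
  have hε : ∀ ε > 0, 0 ≤ (star (Sum.elim u v) ⬝ᵥ B *ᵥ Sum.elim u v).re + ε * C := by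
    intro ε hε
    have h1 := hT.re_trace_pairing_nonneg hφ hadj L (vecMulVec v (star u))
      (posSemidef_vecMulVec_self_star v) hε
    have h2 := (hφ 1 .one).trace_mul_nonneg (posSemidef_vecMulVec_sub_mul_inv_mul u v hε)
    rw [Matrix.mul_sub, trace_sub] at h2
    rw [Matrix.mul_add, trace_add, Matrix.mul_smul, Matrix.mul_one, trace_smul] at h1
    have h2re := (Complex.nonneg_iff.mp h2).1
    simp only [Complex.sub_re, Complex.add_re, smul_eq_mul, Complex.re_ofReal_mul] at h1 h2re
    linarith
  have hre : 0 ≤ (star (Sum.elim u v) ⬝ᵥ B *ᵥ Sum.elim u v).re := by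
    refine le_of_forall_sub_le fun δ hδ => ?_
    have hεC : δ / (C + 1) * C ≤ δ := by
      rw [div_mul_eq_mul_div, div_le_iff₀ (by positivity)]
      nlinarith
    linarith [hε (δ / (C + 1)) (by positivity)]
  exact Complex.nonneg_iff.mpr ⟨hre, (hB.im_star_dotProduct_mulVec_self _).symm⟩

end Schwarz

/-- A positive map `φ` is a generalized Schwarz map iff the tracial inequality
`Tr[φ*(Kᴴ X⁺ K)] ≥ Tr[φ*(K)ᴴ φ*(X)⁺ φ*(K)]` holds whenever `ker X ⊆ ker Kᴴ`. -/
theorem isGenSchwarz_iff_tracial_ineq {n m : ℕ}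
    (φ : Matrix (Fin n) (Fin n) ℂ →ₗ[ℂ] Matrix (Fin m) (Fin m) ℂ)
    (hφ : ∀ X : Matrix (Fin n) (Fin n) ℂ, X.PosSemidef → (φ X).PosSemidef)
    (ψ : Matrix (Fin m) (Fin m) ℂ →ₗ[ℂ] Matrix (Fin n) (Fin n) ℂ)
    (hadj : ∀ (A : Matrix (Fin m) (Fin m) ℂ) (B : Matrix (Fin n) (Fin n) ℂ),
      (Aᴴ * φ B).trace = ((ψ A)ᴴ * B).trace) :
    IsGenSchwarz φ ↔
      ∀ (K X : Matrix (Fin m) (Fin m) ℂ)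
        (Xp : Matrix (Fin m) (Fin m) ℂ) (ψXp : Matrix (Fin n) (Fin n) ℂ),
        X.PosSemidef →
        LinearMap.ker X.mulVecLin ≤ LinearMap.ker Kᴴ.mulVecLin →
        IsMoorePenroseInv X Xp → IsMoorePenroseInv (ψ X) ψXp →
        ((ψ K)ᴴ * ψXp * ψ K).trace.re ≤ (ψ (Kᴴ * Xp * K)).trace.re :=
  ⟨IsGenSchwarz.tracialIneq hφ hadj, TracialIneq.isGenSchwarz hφ hadj⟩
end

section
/- A positive linear map φ: M_n → M_n satisfies G(φ(L), φ(Y)) ≤ G(L,Y) for all (L,Y) — where G(L,Y) = 0 if the block matrix [[Y, L],[L*, −1_n]] is negative semidefinite and G(L,Y) = +∞ otherwise — if and only if φ satisfies the Schwarz inequality φ(A*A) ≥ φ(A)* φ(A) for all A. Equivalently: φ(Y) ≤ −φ(L)φ(L)* holds whenever Y ≤ −L L*, if and only if φ satisfies the Schwarz inequality. -/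
open Matrix ComplexOrder

private lemma phi_herm {n : ℕ}
    (φ : Matrix (Fin n) (Fin n) ℂ →ₗ[ℂ] Matrix (Fin n) (Fin n) ℂ)
    (hφ : ∀ X : Matrix (Fin n) (Fin n) ℂ, X.PosSemidef → (φ X).PosSemidef)
    {H : Matrix (Fin n) (Fin n) ℂ} (hH : H.IsHermitian) : (φ H).IsHermitian := by
  have key : (2:ℂ) • H = (1 + H)ᴴ * (1 + H) - 1 - Hᴴ * H := by
    rw [conjTranspose_add, conjTranspose_one, hH.eq]
    simp only [add_mul, mul_add, one_mul, mul_one, two_smul]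
    abel
  have h1 := (hφ _ (posSemidef_conjTranspose_mul_self (1 + H))).isHermitian
  have h2 := (hφ _ (PosSemidef.one : (1 : Matrix (Fin n) (Fin n) ℂ).PosSemidef)).isHermitian
  have h3 := (hφ _ (posSemidef_conjTranspose_mul_self H)).isHermitian
  have h4 : ((2:ℂ) • φ H).IsHermitian := by
    rw [← φ.map_smul, key, map_sub, map_sub]
    exact (h1.sub h2).sub h3
  have h5 : (2:ℂ) • (φ H)ᴴ = (2:ℂ) • φ H := by
    have := h4.eq
    rwa [conjTranspose_smul, star_ofNat] at this
  exact smul_right_injective _ (two_ne_zero) h5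

private lemma phi_star {n : ℕ}
    (φ : Matrix (Fin n) (Fin n) ℂ →ₗ[ℂ] Matrix (Fin n) (Fin n) ℂ)
    (hφ : ∀ X : Matrix (Fin n) (Fin n) ℂ, X.PosSemidef → (φ X).PosSemidef)
    (X : Matrix (Fin n) (Fin n) ℂ) : φ Xᴴ = (φ X)ᴴ := by
  have hH : (X + Xᴴ).IsHermitian := by
    simp [IsHermitian, conjTranspose_add, add_comm]
  have hK : (Complex.I • (X - Xᴴ)).IsHermitian := by
    simp only [IsHermitian, conjTranspose_smul, conjTranspose_sub, conjTranspose_conjTranspose,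
      Complex.star_def, Complex.conj_I, neg_smul, smul_sub]
    abel
  have hfH := (phi_herm φ hφ hH).eq
  have hfK := (phi_herm φ hφ hK).eq
  have hXd : Xᴴ = (2:ℂ)⁻¹ • ((X + Xᴴ) + Complex.I • (Complex.I • (X - Xᴴ))) := by
    rw [smul_smul, Complex.I_mul_I, neg_one_smul]
    module
  have hX : X = (2:ℂ)⁻¹ • ((X + Xᴴ) - Complex.I • (Complex.I • (X - Xᴴ))) := by
    rw [smul_smul, Complex.I_mul_I, neg_one_smul]
    module
  rw [hXd, φ.map_smul, map_add, φ.map_smul]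
  conv_rhs => rw [hX, φ.map_smul, map_sub, φ.map_smul]
  rw [conjTranspose_smul, conjTranspose_sub, conjTranspose_smul, hfH, hfK,
    Complex.star_def, Complex.conj_I, neg_smul, sub_neg_eq_add]
  simp [map_ofNat, one_div]

/-- A positive map `φ : M_n → M_n` satisfies `φ(Y) ≤ −φ(L)φ(L)ᴴ` whenever
`Y ≤ −LLᴴ` (with `Y` self-adjoint), iff `φ` satisfies the Schwarz inequality. -/
theorem G_monotone_iff_schwarz {n : ℕ}
    (φ : Matrix (Fin n) (Fin n) ℂ →ₗ[ℂ] Matrix (Fin n) (Fin n) ℂ)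
    (hφ : ∀ X : Matrix (Fin n) (Fin n) ℂ, X.PosSemidef → (φ X).PosSemidef) :
    (∀ L Y : Matrix (Fin n) (Fin n) ℂ, Y.IsHermitian →
        (-(L * Lᴴ) - Y).PosSemidef →
        (-(φ L * (φ L)ᴴ) - φ Y).PosSemidef) ↔
      (∀ A : Matrix (Fin n) (Fin n) ℂ,
        (φ (Aᴴ * A) - (φ A)ᴴ * φ A).PosSemidef) := by
  constructor
  · intro h A
    have hY : (-(Aᴴ * A)).IsHermitian :=
      (posSemidef_conjTranspose_mul_self A).isHermitian.neg
    have h0 : (-(Aᴴ * Aᴴᴴ) - -(Aᴴ * A)).PosSemidef := by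
      rw [conjTranspose_conjTranspose]
      simpa using (PosSemidef.zero : (0 : Matrix (Fin n) (Fin n) ℂ).PosSemidef)
    have := h Aᴴ (-(Aᴴ * A)) hY h0
    rw [map_neg, phi_star φ hφ, conjTranspose_conjTranspose, sub_neg_eq_add] at this
    have he : -((φ A)ᴴ * φ A) + φ (Aᴴ * A) = φ (Aᴴ * A) - (φ A)ᴴ * φ A := by abel
    rwa [he] at this
  · intro h L Y _ hLY
    have h1 := hφ _ hLY
    rw [map_sub, map_neg] at h1
    have h2 := h Lᴴ
    rw [conjTranspose_conjTranspose, phi_star φ hφ, conjTranspose_conjTranspose] at h2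
    have he : -(φ L * (φ L)ᴴ) - φ Y
        = (-(φ (L * Lᴴ)) - φ Y) + (φ (L * Lᴴ) - φ L * (φ L)ᴴ) := by abel
    rw [he]
    exact h1.add h2
end

section
/- A positive linear map φ: M_n → M_m satisfies the Schwarz inequality φ(K*K) ≥ φ(K)* φ(K) for all K ∈ M_n if and only if for every positive definite X ∈ M_m, the operator inequality φ* ∘ R_X ∘ φ ≤ R_{φ*(X)} holds as operators on the Hilbert–Schmidt space M_n, where R_X(A) := A X is right multiplication. -/
/-!
The adjointness of `φ` and `ψ` turns `Tr(A* (A ψ(X) - ψ(φ(A) X)))` into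
`Tr((φ(A* A) - φ(A)* φ(A)) X)`, so the operator inequality says that the Schwarz defect
`φ(A* A) - φ(A)* φ(A)` pairs nonnegatively with every positive definite `X`. By trace duality
this is equivalent to the defect being positive semidefinite: testing against
`v v* + ε 1` and letting `ε → 0` recovers `v* M v ≥ 0`.
-/

open Matrix ComplexOrder Filter Topology

namespace Matrix

section TraceDuality

variable {𝕜 : Type*} [RCLike 𝕜] {ι : Type*} [Fintype ι]

lemma PosSemidef.trace_mul_nonneg_s14 {M N : Matrix ι ι 𝕜} (hM : M.PosSemidef) (hN : N.PosSemidef) :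
    0 ≤ (M * N).trace := by
  classical
  open scoped MatrixOrder in
  obtain ⟨B, rfl⟩ := CStarAlgebra.nonneg_iff_eq_star_mul_self.mp hM.nonneg
  rw [star_eq_conjTranspose, Matrix.mul_assoc, trace_mul_comm]
  exact (hN.mul_mul_conjTranspose_same B).trace_nonneg

lemma posSemidef_of_forall_posDef_trace_mul_nonneg [DecidableEq ι] {M : Matrix ι ι 𝕜}
    (hM : M.IsHermitian) (h : ∀ X : Matrix ι ι 𝕜, X.PosDef → 0 ≤ (M * X).trace) :
    M.PosSemidef := by
  refine posSemidef_iff_dotProduct_mulVec.mpr ⟨hM, fun v => ?_⟩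
  have hpert : ∀ ε : ℝ,
      (M * (vecMulVec v (star v) + ε • 1)).trace = star v ⬝ᵥ M *ᵥ v + ε • M.trace := by
    intro ε
    rw [Matrix.mul_add, trace_add, mul_smul_comm, Matrix.mul_one, trace_smul, trace_mul_comm,
      vecMulVec_mul, trace_vecMulVec, dotProduct_comm, dotProduct_mulVec]
  have hlim : Tendsto (fun ε : ℝ => star v ⬝ᵥ M *ᵥ v + ε • M.trace) (𝓝[>] 0)
      (𝓝 (star v ⬝ᵥ M *ᵥ v)) := by
    have hcont : Continuous (fun ε : ℝ => star v ⬝ᵥ M *ᵥ v + ε • M.trace) := by fun_prop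
    simpa using (hcont.tendsto 0).mono_left nhdsWithin_le_nhds
  refine ge_of_tendsto hlim ?_
  filter_upwards [self_mem_nhdsWithin] with ε hε
  rw [← hpert ε]
  exact h _ (PosDef.posSemidef_add (posSemidef_vecMulVec_self_star v) (PosDef.one.smul hε))

end TraceDuality

section Adjoint

variable {R : Type*} [CommRing R] [StarRing R] {ι κ : Type*} [Fintype ι] [Fintype κ]
  {φ : Matrix ι ι R →ₗ[R] Matrix κ κ R} {ψ : Matrix κ κ R →ₗ[R] Matrix ι ι R}

lemma trace_conjTranspose_mul_of_adjoint
    (hadj : ∀ A B, (Aᴴ * φ B).trace = ((ψ A)ᴴ * B).trace) (B : Matrix ι ι R)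
    (Y : Matrix κ κ R) : (Bᴴ * ψ Y).trace = ((φ B)ᴴ * Y).trace := by
  apply star_injective
  rw [← trace_conjTranspose, ← trace_conjTranspose, conjTranspose_mul, conjTranspose_mul,
    conjTranspose_conjTranspose, conjTranspose_conjTranspose, hadj]

lemma trace_conjTranspose_mul_sub_of_adjoint
    (hadj : ∀ A B, (Aᴴ * φ B).trace = ((ψ A)ᴴ * B).trace) (A : Matrix ι ι R)
    (X : Matrix κ κ R) :
    (Aᴴ * (A * ψ X - ψ (φ A * X))).trace = (((φ (Aᴴ * A))ᴴ - (φ A)ᴴ * φ A) * X).trace := by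
  have h := trace_conjTranspose_mul_of_adjoint hadj
  rw [Matrix.mul_sub, trace_sub, Matrix.sub_mul, trace_sub, ← h (Aᴴ * A), h A, conjTranspose_mul,
    conjTranspose_conjTranspose, Matrix.mul_assoc, Matrix.mul_assoc]

end Adjoint

end Matrix

/-- A positive map `φ` satisfies the Schwarz inequality iff for every positive
definite `X`, `φ* ∘ R_X ∘ φ ≤ R_{φ*(X)}` as operators on the Hilbert–Schmidt
space `M_n`, i.e. `⟨A, A·φ*(X) − φ*(φ(A)·X)⟩ ≥ 0` for all `A`. -/
theorem schwarz_iff_right_mult_op_ineq {n m : ℕ}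
    (φ : Matrix (Fin n) (Fin n) ℂ →ₗ[ℂ] Matrix (Fin m) (Fin m) ℂ)
    (hφ : ∀ X : Matrix (Fin n) (Fin n) ℂ, X.PosSemidef → (φ X).PosSemidef)
    (ψ : Matrix (Fin m) (Fin m) ℂ →ₗ[ℂ] Matrix (Fin n) (Fin n) ℂ)
    (hadj : ∀ (A : Matrix (Fin m) (Fin m) ℂ) (B : Matrix (Fin n) (Fin n) ℂ),
      (Aᴴ * φ B).trace = ((ψ A)ᴴ * B).trace) :
    (∀ K : Matrix (Fin n) (Fin n) ℂ,
        (φ (Kᴴ * K) - (φ K)ᴴ * φ K).PosSemidef) ↔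
      (∀ X : Matrix (Fin m) (Fin m) ℂ, X.PosDef →
        ∀ A : Matrix (Fin n) (Fin n) ℂ,
          0 ≤ (Aᴴ * (A * ψ X - ψ (φ A * X))).trace) := by
  have hherm : ∀ K, (φ (Kᴴ * K)).IsHermitian := fun K =>
    (hφ _ (posSemidef_conjTranspose_mul_self K)).isHermitian
  constructor
  · intro hschwarz X hX A
    rw [trace_conjTranspose_mul_sub_of_adjoint hadj, (hherm A).eq]
    exact (hschwarz A).trace_mul_nonneg_s14 hX.posSemidef
  · intro hop K
    refine posSemidef_of_forall_posDef_trace_mul_nonneg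
      ((hherm K).sub (isHermitian_conjTranspose_mul_self _)) fun X hX => ?_
    simpa only [trace_conjTranspose_mul_sub_of_adjoint hadj, (hherm K).eq] using hop X hX K
end

section
/- Let φ: M_n → M_m be a positive linear map and X ∈ M_m positive semidefinite. Then ker(R_X) ⊆ ker(φ*) (as operators on the Hilbert–Schmidt space M_m, where R_X(K) = KX) if and only if ker(X) ⊆ ker(φ(1_n)) (as subspaces of ℂ^m). -/
/-!
Since `X` is Hermitian, `K * X = 0` says exactly that the rows of `K` (conjugated) lie in `ker X`.
Testing with `K = v vᴴ` for `v ∈ ker X` gives `vᴴ φ(1) v = tr (Kᴴ φ(1)) = tr (ψ K)ᴴ = 0`,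
hence `φ(1) v = 0`.
Conversely, positivity forces `ker φ(1) ⊆ ker φ(B)` for every `B`: for `P ≥ 0` we have
`0 ≤ φ(P) ≤ ‖P‖ φ(1)`, and the positive matrices span `M_n`. So if `ker X ⊆ ker φ(1)` and
`K * X = 0`, then `φ(ψ K) Kᴴ = 0`, and `tr ((ψ K)ᴴ ψ K) = tr (Kᴴ φ(ψ K)) = 0` gives `ψ K = 0`.
-/

open Matrix ComplexOrder

namespace Matrix

variable {l m n : Type*} [Fintype n]

theorem trace_vecMulVec_mul {R : Type*} [CommSemiring R] (x y : n → R) (A : Matrix n n R) :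
    trace (vecMulVec x y * A) = y ⬝ᵥ A *ᵥ x := by
  rw [vecMulVec_mul, trace_vecMulVec, dotProduct_comm, dotProduct_mulVec]

theorem mul_eq_zero_of_ker_mulVecLin_le {R : Type*} [CommSemiring R] {A B : Matrix m n R}
    (h : LinearMap.ker A.mulVecLin ≤ LinearMap.ker B.mulVecLin) {M : Matrix n l R}
    (hM : A * M = 0) : B * M = 0 := by
  ext i j
  have hcol : A *ᵥ (fun k => M k j) = 0 := funext fun i => congrFun (congrFun hM i) j
  exact congrFun (h (x := fun k => M k j) hcol) i

theorem PosSemidef.mulVec_eq_zero_of_le {𝕜 : Type*} [RCLike 𝕜] {A B : Matrix n n 𝕜}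
    (hA : A.PosSemidef) (hBA : (B - A).PosSemidef) {w : n → 𝕜} (hB : B *ᵥ w = 0) :
    A *ᵥ w = 0 := by
  have hle : 0 ≤ star w ⬝ᵥ (B - A) *ᵥ w := hBA.dotProduct_mulVec_nonneg w
  rw [sub_mulVec, hB, zero_sub, dotProduct_neg, neg_nonneg] at hle
  exact (hA.dotProduct_mulVec_zero_iff w).mp (le_antisymm hle (hA.dotProduct_mulVec_nonneg w))

variable [DecidableEq n]

open scoped MatrixOrder in
theorem span_posSemidef_s15 : Submodule.span ℂ {A : Matrix n n ℂ | A.PosSemidef} = ⊤ := by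
  simpa only [nonneg_iff_posSemidef] using CStarAlgebra.span_nonneg (A := Matrix n n ℂ)

open scoped MatrixOrder Matrix.Norms.L2Operator in
theorem IsHermitian.exists_posSemidef_smul_one_sub {A : Matrix n n ℂ} (hA : A.IsHermitian) :
    ∃ c : ℝ, (c • (1 : Matrix n n ℂ) - A).PosSemidef := by
  refine ⟨‖A‖, ?_⟩
  rw [← nonneg_iff_posSemidef, sub_nonneg, ← Algebra.algebraMap_eq_smul_one]
  exact hA.isSelfAdjoint.le_algebraMap_norm_self

theorem ker_mulVecLin_map_one_le [Fintype m] {φ : Matrix n n ℂ →ₗ[ℂ] Matrix m m ℂ}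
    (hφ : ∀ P : Matrix n n ℂ, P.PosSemidef → (φ P).PosSemidef) (B : Matrix n n ℂ) :
    LinearMap.ker (φ 1).mulVecLin ≤ LinearMap.ker (φ B).mulVecLin := by
  intro w hw
  rw [LinearMap.mem_ker, mulVecLin_apply] at hw ⊢
  have hB : B ∈ Submodule.span ℂ {P : Matrix n n ℂ | P.PosSemidef} := by
    rw [span_posSemidef_s15]; trivial
  induction hB using Submodule.span_induction with
  | mem P hP =>
    obtain ⟨c, hc⟩ := hP.isHermitian.exists_posSemidef_smul_one_sub
    refine (hφ P hP).mulVec_eq_zero_of_le (B := c • φ 1) ?_ (by rw [smul_mulVec, hw, smul_zero])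
    simpa only [map_sub, LinearMap.map_smul_of_tower] using hφ _ hc
  | zero => rw [map_zero, zero_mulVec]
  | add A B _ _ hA hB => rw [map_add, add_mulVec, hA, hB, add_zero]
  | smul c A _ hA => rw [map_smul, smul_mulVec, hA, smul_zero]

end Matrix

/-- For a positive map `φ` and PSD `X`: `ker R_X ⊆ ker φ*` (on the
Hilbert–Schmidt space `M_m`) iff `ker X ⊆ ker φ(1)` (as subspaces of `ℂ^m`). -/
theorem ker_rightMul_subset_ker_adjoint_iff {n m : ℕ}
    (φ : Matrix (Fin n) (Fin n) ℂ →ₗ[ℂ] Matrix (Fin m) (Fin m) ℂ)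
    (hφ : ∀ X : Matrix (Fin n) (Fin n) ℂ, X.PosSemidef → (φ X).PosSemidef)
    (ψ : Matrix (Fin m) (Fin m) ℂ →ₗ[ℂ] Matrix (Fin n) (Fin n) ℂ)
    (hadj : ∀ (A : Matrix (Fin m) (Fin m) ℂ) (B : Matrix (Fin n) (Fin n) ℂ),
      (Aᴴ * φ B).trace = ((ψ A)ᴴ * B).trace)
    (X : Matrix (Fin m) (Fin m) ℂ) (hX : X.PosSemidef) :
    (∀ K : Matrix (Fin m) (Fin m) ℂ, K * X = 0 → ψ K = 0) ↔
      LinearMap.ker X.mulVecLin ≤ LinearMap.ker (φ 1).mulVecLin := by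
  constructor
  · intro h v hv
    rw [LinearMap.mem_ker, mulVecLin_apply] at hv ⊢
    have hK : vecMulVec v (star v) * X = 0 := by
      rw [vecMulVec_mul, ← hX.isHermitian.eq, vecMul_conjTranspose, star_star, hv, star_zero]
      exact vecMulVec_zero v
    have htr := hadj (vecMulVec v (star v)) 1
    rw [h _ hK, conjTranspose_vecMulVec, star_star, trace_vecMulVec_mul] at htr
    simp only [conjTranspose_zero, zero_mul, trace_zero] at htr
    exact ((hφ 1 PosSemidef.one).dotProduct_mulVec_zero_iff v).mp htr
  · intro h K hK
    have hXK : X * Kᴴ = 0 := by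
      simpa only [conjTranspose_mul, hX.isHermitian.eq, conjTranspose_zero] using
        congrArg conjTranspose hK
    have hφK : φ (ψ K) * Kᴴ = 0 :=
      mul_eq_zero_of_ker_mulVecLin_le (h.trans (ker_mulVecLin_map_one_le hφ _)) hXK
    rw [← trace_conjTranspose_mul_self_eq_zero_iff, ← hadj, trace_mul_comm, hφK, trace_zero]
end

section
/- Let φ: M_n → M_m be a positive linear map and X ∈ M_m positive semidefinite. If ker(R_X) ⊆ ker(φ*) on M_m (with R_X(K) = KX), then ker(R_{φ*(X)}) ⊆ ker(φ) on M_n, i.e., K φ*(X) = 0 implies φ(K) = 0 for K ∈ M_n. -/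
/-
Put Z = φ(KᴴK), which is positive semidefinite. By adjointness tr(ZX) = tr((Kφ*(X))ᴴK) = 0, and
two positive semidefinite matrices whose product has trace zero multiply to zero, so ZX = 0. The
hypothesis then gives φ*(Z) = 0, hence tr(ZᴴZ) = tr(φ*(Z)ᴴKᴴK) = 0 and Z = 0.
Finally φ(KᴴK) = 0 forces φ(K) = 0: a positive functional f with f(KᴴK) = 0 satisfies
0 ≤ f((1 + tK)ᴴ(1 + tK)) = f(1) + t f(K) + t̄ f(Kᴴ) for all t ∈ ℂ, which forces f(K) = 0, and the
positive functionals B ↦ tr(P φ(B)), P ⪰ 0, separate the points of M_m.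
-/

open Matrix ComplexOrder
open scoped MatrixOrder

theorem Complex.eq_zero_of_forall_nonneg_add_ofReal_mul {p d : ℂ} (h : ∀ s : ℝ, 0 ≤ p + s * d) :
    d = 0 := by
  have hre (s : ℝ) : 0 ≤ p.re + s * d.re := by simpa using (nonneg_iff.mp (h s)).1
  have him (s : ℝ) : p.im + s * d.im = 0 := by simpa [eq_comm] using (nonneg_iff.mp (h s)).2
  refine Complex.ext ?_ ?_
  · by_contra hd
    have := hre (-(p.re + 1) / d.re)
    rw [div_mul_cancel₀ _ hd] at this
    linarith
  · linarith [him 0, him 1, zero_im]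

theorem PositiveLinearMap.map_eq_zero_of_map_star_mul_self_eq_zero {A : Type*} [Ring A]
    [StarRing A] [Algebra ℂ A] [StarModule ℂ A] [PartialOrder A] [StarOrderedRing A]
    (f : A →ₚ[ℂ] ℂ) {a : A} (ha : f (star a * a) = 0) : f a = 0 := by
  have hquad : ∀ t : ℂ, 0 ≤ f 1 + (t * f a + star t * f (star a)) := by
    intro t
    have hexp : star (1 + t • a) * (1 + t • a)
        = 1 + (t • a + star t • star a) + (star t * t) • (star a * a) := by
      simp only [star_add, star_one, star_smul, add_mul, mul_add, one_mul, mul_one,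
        smul_mul_smul_comm]
      abel
    have := f.map_nonneg (star_mul_self_nonneg (1 + t • a))
    rw [hexp] at this
    simpa [ha] using this
  have hsym : f a + f (star a) = 0 :=
    Complex.eq_zero_of_forall_nonneg_add_ofReal_mul fun s => by
      simpa [mul_add] using hquad s
  have hanti : Complex.I * (f a - f (star a)) = 0 :=
    Complex.eq_zero_of_forall_nonneg_add_ofReal_mul fun s => by
      convert hquad (s * Complex.I) using 2
      simp only [star_mul', Complex.star_def, Complex.conj_ofReal, Complex.conj_I]
      ring
  linear_combination (hsym - Complex.I * hanti) / 2 + (f a - f (star a)) / 2 * Complex.I_sq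

namespace Matrix

variable {n 𝕜 : Type*} [Fintype n] [RCLike 𝕜]

theorem PosSemidef.trace_mul_nonneg_s16 {A B : Matrix n n 𝕜} (hA : A.PosSemidef) (hB : B.PosSemidef) :
    0 ≤ (A * B).trace := by
  classical
  obtain ⟨a, rfl⟩ := CStarAlgebra.nonneg_iff_eq_star_mul_self.mp hA.nonneg
  rw [star_eq_conjTranspose, Matrix.mul_assoc, trace_mul_comm]
  exact (hB.mul_mul_conjTranspose_same a).trace_nonneg

theorem PosSemidef.mul_eq_zero_of_trace_mul_eq_zero {A B : Matrix n n 𝕜} (hA : A.PosSemidef)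
    (hB : B.PosSemidef) (h : (A * B).trace = 0) : A * B = 0 := by
  classical
  obtain ⟨a, rfl⟩ := CStarAlgebra.nonneg_iff_eq_star_mul_self.mp hA.nonneg
  obtain ⟨b, rfl⟩ := CStarAlgebra.nonneg_iff_eq_star_mul_self.mp hB.nonneg
  simp only [star_eq_conjTranspose] at h ⊢
  have hab : a * bᴴ = 0 := by
    rw [← trace_conjTranspose_mul_self_eq_zero_iff, ← h, conjTranspose_mul,
      conjTranspose_conjTranspose, Matrix.mul_assoc, trace_mul_comm]
    simp only [Matrix.mul_assoc]
  rw [Matrix.mul_assoc, ← Matrix.mul_assoc a, hab, Matrix.zero_mul, Matrix.mul_zero]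

theorem eq_zero_of_forall_posSemidef_trace_mul_eq_zero [DecidableEq n] {M : Matrix n n ℂ}
    (h : ∀ P : Matrix n n ℂ, P.PosSemidef → (P * M).trace = 0) : M = 0 := by
  have hfun : (traceLinearMap n ℂ ℂ) ∘ₗ (LinearMap.mulRight ℂ M) = 0 :=
    LinearMap.ext_on CStarAlgebra.span_nonneg fun P hP => h P hP.posSemidef
  have := LinearMap.congr_fun hfun Mᴴ
  simpa [trace_conjTranspose_mul_self_eq_zero_iff] using this

end Matrix

theorem LinearMap.map_eq_zero_of_map_conjTranspose_mul_self_eq_zero {n m : Type*} [Fintype n]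
    [DecidableEq n] [Fintype m] [DecidableEq m] (φ : Matrix n n ℂ →ₗ[ℂ] Matrix m m ℂ)
    (hφ : ∀ X : Matrix n n ℂ, X.PosSemidef → (φ X).PosSemidef) {K : Matrix n n ℂ}
    (hK : φ (Kᴴ * K) = 0) : φ K = 0 := by
  refine eq_zero_of_forall_posSemidef_trace_mul_eq_zero fun P hP => ?_
  let f : Matrix n n ℂ →ₚ[ℂ] ℂ :=
    .mk₀ (traceLinearMap m ℂ ℂ ∘ₗ LinearMap.mulLeft ℂ P ∘ₗ φ) fun Q hQ =>
      hP.trace_mul_nonneg_s16 (hφ Q hQ.posSemidef)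
  refine f.map_eq_zero_of_map_star_mul_self_eq_zero ?_
  change (P * φ (star K * K)).trace = 0
  rw [star_eq_conjTranspose, hK, Matrix.mul_zero, trace_zero]

/-- For a positive map `φ` and PSD `X`: if `ker R_X ⊆ ker φ*` on `M_m`,
then `ker R_{φ*(X)} ⊆ ker φ` on `M_n`. -/
theorem ker_rightMul_adjoint_subset_ker {n m : ℕ}
    (φ : Matrix (Fin n) (Fin n) ℂ →ₗ[ℂ] Matrix (Fin m) (Fin m) ℂ)
    (hφ : ∀ X : Matrix (Fin n) (Fin n) ℂ, X.PosSemidef → (φ X).PosSemidef)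
    (ψ : Matrix (Fin m) (Fin m) ℂ →ₗ[ℂ] Matrix (Fin n) (Fin n) ℂ)
    (hadj : ∀ (A : Matrix (Fin m) (Fin m) ℂ) (B : Matrix (Fin n) (Fin n) ℂ),
      (Aᴴ * φ B).trace = ((ψ A)ᴴ * B).trace)
    (X : Matrix (Fin m) (Fin m) ℂ) (hX : X.PosSemidef)
    (h : ∀ K : Matrix (Fin m) (Fin m) ℂ, K * X = 0 → ψ K = 0) :
    ∀ K : Matrix (Fin n) (Fin n) ℂ, K * ψ X = 0 → φ K = 0 := by
  intro K hK
  have hZ : (φ (Kᴴ * K)).PosSemidef := hφ _ (posSemidef_conjTranspose_mul_self K)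
  have htrace : (φ (Kᴴ * K) * X).trace = 0 :=
    calc (φ (Kᴴ * K) * X).trace = (Xᴴ * φ (Kᴴ * K)).trace := by
          rw [hX.isHermitian.eq, trace_mul_comm]
      _ = ((K * ψ X)ᴴ * K).trace := by rw [hadj, conjTranspose_mul, Matrix.mul_assoc]
      _ = 0 := by rw [hK, conjTranspose_zero, Matrix.zero_mul, trace_zero]
  have hψZ : ψ (φ (Kᴴ * K)) = 0 := h _ (hZ.mul_eq_zero_of_trace_mul_eq_zero hX htrace)
  have hZ0 : φ (Kᴴ * K) = 0 := by
    rw [← trace_conjTranspose_mul_self_eq_zero_iff, hadj, hψZ, conjTranspose_zero,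
      Matrix.zero_mul, trace_zero]
  exact φ.map_eq_zero_of_map_conjTranspose_mul_self_eq_zero hφ hZ0
end

section
/- If φ: M_n → M_m is a (k+1)-positive linear map, then id_k ⊗ φ: M_{kn} → M_{km} is a generalized Schwarz map, i.e., for every X ∈ M_{kn}, the block matrix [[(id_k⊗φ)(1_{kn}), (id_k⊗φ)(X)],[(id_k⊗φ)(X)*, (id_k⊗φ)(X*X)]] is positive semidefinite. -/
/-!
`[[1, X], [Xᴴ, XᴴX]]` is the Gram matrix of the block row `[1, X]`, hence the sum over the block
rows `l` of the Gram matrices of `[eₗ ⊗ 1, Xₗ]`, where `Xₗ` is the `l`-th block row of `X`. Only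
`k + 1` distinct blocks occur in the `l`-th summand: it is a compression `(V ⊗ 1)ᴴ G (V ⊗ 1)`, by a
scalar matrix `V`, of the `(k + 1)`-block Gram matrix `G` of `[1, Xₗ]`. Applying `φ` blockwise
commutes with sums and with such compressions, so `(k + 1)`-positivity makes the blockwise image of
every summand, hence of `[[1, X], [Xᴴ, XᴴX]]`, positive semidefinite. Being Hermitian, that image
has adjoint off-diagonal blocks.
-/

open Matrix ComplexOrder

/-- The map `id_k ⊗ φ` acting blockwise. -/
def blockMap {n m : ℕ} (k : ℕ)
    (φ : Matrix (Fin n) (Fin n) ℂ →ₗ[ℂ] Matrix (Fin m) (Fin m) ℂ)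
    (M : Matrix (Fin k × Fin n) (Fin k × Fin n) ℂ) :
    Matrix (Fin k × Fin m) (Fin k × Fin m) ℂ :=
  fun p q => φ (fun a b => M (p.1, a) (q.1, b)) p.2 q.2

namespace Matrix

section Blockwise

variable {R α β ι κ : Type*} [CommSemiring R] (φ : Matrix α α R →ₗ[R] Matrix β β R)

def blockwise (M : Matrix (ι × α) (κ × α) R) : Matrix (ι × β) (κ × β) R :=
  of fun p q => φ (M.submatrix (Prod.mk p.1) (Prod.mk q.1)) p.2 q.2

@[simp]
theorem blockwise_apply (M : Matrix (ι × α) (κ × α) R) (p : ι × β) (q : κ × β) :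
    blockwise φ M p q = φ (M.submatrix (Prod.mk p.1) (Prod.mk q.1)) p.2 q.2 :=
  rfl

theorem blockwise_sum {σ : Type*} (s : Finset σ) (M : σ → Matrix (ι × α) (κ × α) R) :
    blockwise φ (∑ l ∈ s, M l) = ∑ l ∈ s, blockwise φ (M l) := by
  ext p q
  have hblock : (∑ l ∈ s, M l).submatrix (Prod.mk p.1) (Prod.mk q.1) =
      ∑ l ∈ s, (M l).submatrix (Prod.mk p.1) (Prod.mk q.1) := by
    ext a b
    simp only [submatrix_apply, sum_apply]
  simp only [blockwise_apply, hblock, map_sum, sum_apply]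

theorem blockwise_submatrix {ι' κ' : Type*} (M : Matrix (ι × α) (κ × α) R) (f : ι' → ι)
    (g : κ' → κ) :
    blockwise φ (M.submatrix (Prod.map f id) (Prod.map g id)) =
      (blockwise φ M).submatrix (Prod.map f id) (Prod.map g id) :=
  rfl

theorem blockwise_fromBlocks (A : Matrix (ι × α) (ι × α) R) (B : Matrix (ι × α) (κ × α) R)
    (C : Matrix (κ × α) (ι × α) R) (D : Matrix (κ × α) (κ × α) R) :
    blockwise φ ((fromBlocks A B C D).submatrix (Equiv.sumProdDistrib ι κ α)
        (Equiv.sumProdDistrib ι κ α)) =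
      (fromBlocks (blockwise φ A) (blockwise φ B) (blockwise φ C) (blockwise φ D)).submatrix
        (Equiv.sumProdDistrib ι κ β) (Equiv.sumProdDistrib ι κ β) := by
  ext ⟨i | i, a⟩ ⟨j | j, b⟩ <;> rfl

theorem blockwise_diagonal_mul_mul_diagonal [Fintype α] [DecidableEq α] [Fintype β]
    [DecidableEq β] [Fintype ι] [DecidableEq ι] [Fintype κ] [DecidableEq κ] (c : ι → R)
    (d : κ → R) (M : Matrix (ι × α) (κ × α) R) :
    blockwise φ (diagonal (fun p : ι × α => c p.1) * M * diagonal (fun q : κ × α => d q.1)) =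
      diagonal (fun p : ι × β => c p.1) * blockwise φ M * diagonal (fun q : κ × β => d q.1) := by
  ext ⟨i, a⟩ ⟨j, b⟩
  have hblock : (diagonal (fun p : ι × α => c p.1) * M * diagonal (fun q : κ × α => d q.1)).submatrix
      (Prod.mk i) (Prod.mk j) = (c i * d j) • M.submatrix (Prod.mk i) (Prod.mk j) := by
    ext a' b'
    simp only [submatrix_apply, diagonal_mul, mul_diagonal, smul_apply, smul_eq_mul]
    ring
  simp only [blockwise_apply, hblock, map_smul, diagonal_mul, mul_diagonal, smul_apply, smul_eq_mul]
  ring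

end Blockwise

section Compression

variable {𝕜 α β ι κ : Type*} [RCLike 𝕜] [Fintype α] [DecidableEq α] [Fintype β] [DecidableEq β]
  [Fintype κ] [DecidableEq κ] (φ : Matrix α α 𝕜 →ₗ[𝕜] Matrix β β 𝕜)

theorem posSemidef_blockwise_compression
    (hφ : ∀ M : Matrix (ι × α) (ι × α) 𝕜, M.PosSemidef → (blockwise φ M).PosSemidef)
    {M : Matrix (ι × α) (ι × α) 𝕜} (hM : M.PosSemidef) (f : κ → ι) (c : κ → 𝕜) :
    (blockwise φ ((diagonal fun p : κ × α => star (c p.1)) *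
      M.submatrix (Prod.map f id) (Prod.map f id) * diagonal fun p : κ × α => c p.1)).PosSemidef := by
  have hstar : (diagonal fun p : κ × β => c p.1)ᴴ = diagonal fun p => star (c p.1) :=
    diagonal_conjTranspose _
  rw [blockwise_diagonal_mul_mul_diagonal φ (fun i => star (c i)) c, blockwise_submatrix, ← hstar]
  exact ((hφ M hM).submatrix _).conjTranspose_mul_mul_same _

end Compression

section AugmentedRowBlock

variable {R α ι : Type*} [CommSemiring R] [StarRing R] [Fintype α] [DecidableEq α] {k : ℕ}

/-- The block row `[1, Xₗ]`, where `Xₗ` is the `l`-th block row of `X`. -/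
def augmentedRowBlock (X : Matrix (ι × α) (Fin k × α) R) (l : ι) :
    Matrix α (Fin (k + 1) × α) R :=
  of fun e p => Fin.cases ((1 : Matrix α α R) e p.2) (fun j => X (l, e) (j, p.2)) p.1

variable (X : Matrix (ι × α) (Fin k × α) R) (l : ι) (a b : α)

@[simp]
theorem gram_augmentedRowBlock_zero_zero :
    ((augmentedRowBlock X l)ᴴ * augmentedRowBlock X l) (0, a) (0, b) = (1 : Matrix α α R) a b := by
  simp [mul_apply, augmentedRowBlock, one_apply, apply_ite (star : R → R), eq_comm]

@[simp]
theorem gram_augmentedRowBlock_zero_succ (j : Fin k) :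
    ((augmentedRowBlock X l)ᴴ * augmentedRowBlock X l) (0, a) (j.succ, b) = X (l, a) (j, b) := by
  simp [mul_apply, augmentedRowBlock, one_apply, apply_ite (star : R → R)]

@[simp]
theorem gram_augmentedRowBlock_succ_zero (i : Fin k) :
    ((augmentedRowBlock X l)ᴴ * augmentedRowBlock X l) (i.succ, a) (0, b) =
      star (X (l, b) (i, a)) := by
  simp [mul_apply, augmentedRowBlock, one_apply]

@[simp]
theorem gram_augmentedRowBlock_succ_succ (i j : Fin k) :
    ((augmentedRowBlock X l)ᴴ * augmentedRowBlock X l) (i.succ, a) (j.succ, b) =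
      ∑ e, star (X (l, e) (i, a)) * X (l, e) (j, b) := by
  simp [mul_apply, augmentedRowBlock]

/-- The `l`-th summand puts block `0` of the Gram matrix of `[1, Xₗ]` at block position `inl l`
and block `j.succ` at `inr j`. -/
theorem fromBlocks_eq_sum_compression [Fintype ι] [DecidableEq ι] :
    (fromBlocks 1 X Xᴴ (Xᴴ * X)).submatrix (Equiv.sumProdDistrib ι (Fin k) α)
        (Equiv.sumProdDistrib ι (Fin k) α) =
      ∑ l, (diagonal fun p : (ι ⊕ Fin k) × α => star (Sum.elim (Pi.single l 1) 1 p.1)) *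
        ((augmentedRowBlock X l)ᴴ * augmentedRowBlock X l).submatrix
          (Prod.map (Sum.elim (fun _ => 0) Fin.succ) id)
          (Prod.map (Sum.elim (fun _ => 0) Fin.succ) id) *
        diagonal fun p : (ι ⊕ Fin k) × α => Sum.elim (Pi.single l 1) 1 p.1 := by
  ext ⟨i | i, a⟩ ⟨j | j, b⟩ <;>
    simp only [sum_apply, diagonal_mul, mul_diagonal, submatrix_apply, Prod.map_apply,
      Sum.elim_inl, Sum.elim_inr, Equiv.sumProdDistrib_apply_left,
      Equiv.sumProdDistrib_apply_right, fromBlocks_apply₁₁, fromBlocks_apply₁₂,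
      fromBlocks_apply₂₁, fromBlocks_apply₂₂, id]
  · by_cases hij : i = j <;> by_cases hab : a = b <;> simp [Pi.single_apply, one_apply, hij, hab]
  · simp [Pi.single_apply, apply_ite (star : R → R)]
  · simp [Pi.single_apply]
  · simp only [gram_augmentedRowBlock_succ_succ]
    simp [mul_apply, Fintype.sum_prod_type]

end AugmentedRowBlock

theorem posSemidef_fromBlocks_blockwise {𝕜 α β ι : Type*} [RCLike 𝕜] [Fintype α]
    [DecidableEq α] [Fintype β] [DecidableEq β] [Fintype ι] [DecidableEq ι] {k : ℕ}
    (φ : Matrix α α 𝕜 →ₗ[𝕜] Matrix β β 𝕜)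
    (hφ : ∀ M : Matrix (Fin (k + 1) × α) (Fin (k + 1) × α) 𝕜,
      M.PosSemidef → (blockwise φ M).PosSemidef)
    (X : Matrix (ι × α) (Fin k × α) 𝕜) :
    (fromBlocks (blockwise φ 1) (blockwise φ X) (blockwise φ X)ᴴ
      (blockwise φ (Xᴴ * X))).PosSemidef := by
  have hT : (blockwise φ ((fromBlocks 1 X Xᴴ (Xᴴ * X)).submatrix
      (Equiv.sumProdDistrib ι (Fin k) α) (Equiv.sumProdDistrib ι (Fin k) α))).PosSemidef := by
    rw [fromBlocks_eq_sum_compression, blockwise_sum]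
    exact posSemidef_sum _ fun l _ =>
      posSemidef_blockwise_compression φ hφ (posSemidef_conjTranspose_mul_self _) _ _
  rw [blockwise_fromBlocks, posSemidef_submatrix_equiv] at hT
  have hadjoint : (blockwise φ X)ᴴ = blockwise φ Xᴴ :=
    (isHermitian_fromBlocks_iff.mp hT.isHermitian).2.1
  rwa [hadjoint]

end Matrix

/-- If `φ` is `(k+1)`-positive, then `id_k ⊗ φ` is a generalized Schwarz map. -/
theorem blockMap_isGenSchwarz_of_succ_positive {n m : ℕ} (k : ℕ)
    (φ : Matrix (Fin n) (Fin n) ℂ →ₗ[ℂ] Matrix (Fin m) (Fin m) ℂ)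
    (hφ : ∀ M : Matrix (Fin (k + 1) × Fin n) (Fin (k + 1) × Fin n) ℂ,
      M.PosSemidef → (blockMap (k + 1) φ M).PosSemidef) :
    ∀ X : Matrix (Fin k × Fin n) (Fin k × Fin n) ℂ,
      (Matrix.fromBlocks (blockMap k φ 1) (blockMap k φ X)
        (blockMap k φ X)ᴴ (blockMap k φ (Xᴴ * X))).PosSemidef :=
  posSemidef_fromBlocks_blockwise φ hφ
end
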